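/- arXiv:2507.09272 — 9 statements merged into one kernel-verified Lean document; each statement's English description precedes it below -/
import Mathlib

section
/- Suppose l^{(1)},…,l^{(t)} ∈ ℱ(𝒩) generate the flux cone ℱ(𝒩). Then for any κ ∈ ℝ_{>0}^m and any positive steady state x ∈ ℝ_{>0}^s for κ, there exist p ∈ ℝ_{>0}^s and λ ∈ ℝ_{≥0}^t such that Jac_f(κ,x) = J(p,λ). -/
open Matrix BigOperators

/-- Mass-action rate vector: `v j (κ, x) = κ_j ∏_i x_i ^ μ_{ij}`. -/
noncomputable def vRate {s m : ℕ} (μ : Fin s → Fin m → ℕ) (κ : Fin m → ℝ)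
    (x : Fin s → ℝ) : Fin m → ℝ :=
  fun j => κ j * ∏ i, x i ^ μ i j

/-- Mass-action species-formation rate function `f(κ, x) = 𝒩 v(κ, x)`. -/
noncomputable def fRate {s m : ℕ} (N : Matrix (Fin s) (Fin m) ℝ)
    (μ : Fin s → Fin m → ℕ) (κ : Fin m → ℝ) (x : Fin s → ℝ) : Fin s → ℝ :=
  N.mulVec (vRate μ κ x)

/-- Jacobian matrix of `f(κ, ·)` at `x`. -/
noncomputable def jacF {s m : ℕ} (N : Matrix (Fin s) (Fin m) ℝ)
    (μ : Fin s → Fin m → ℕ) (κ : Fin m → ℝ) (x : Fin s → ℝ) :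
    Matrix (Fin s) (Fin s) ℝ :=
  Matrix.of fun i j =>
    fderiv ℝ (fun y : Fin s → ℝ => fRate N μ κ y i) x (Pi.single j 1)

/-- The flux cone `ℱ(𝒩) = {α ∈ ℝ_{≥0}^m : 𝒩 α = 0}`. -/
def fluxCone {s m : ℕ} (N : Matrix (Fin s) (Fin m) ℝ) : Set (Fin m → ℝ) :=
  {α | (∀ j, 0 ≤ α j) ∧ N.mulVec α = 0}

section aux
variable {s : ℕ}

lemma monomial_hasFDerivAt (n : Fin s → ℕ) (x : Fin s → ℝ) :
    HasFDerivAt (fun y : Fin s → ℝ => ∏ i, y i ^ n i)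
      (∑ i, (∏ j ∈ Finset.univ.erase i, x j ^ n j) •
        (((n i : ℝ) * x i ^ (n i - 1)) • ContinuousLinearMap.proj (R := ℝ) (φ := fun _ : Fin s => ℝ) i)) x := by
  have hproj : ∀ i : Fin s, HasFDerivAt (fun y : Fin s → ℝ => y i)
      (ContinuousLinearMap.proj (R := ℝ) (φ := fun _ : Fin s => ℝ) i) x :=
    fun i => (ContinuousLinearMap.proj (R := ℝ) (φ := fun _ : Fin s => ℝ) i).hasFDerivAt
  exact HasFDerivAt.finset_prod (fun i _ =>
    (hasDerivAt_pow (n i) (x i)).comp_hasFDerivAt x (hproj i))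

lemma monomial_deriv_apply (n : Fin s → ℕ) (x : Fin s → ℝ) (hx : ∀ i, 0 < x i) (j : Fin s) :
    (∑ i, (∏ k ∈ Finset.univ.erase i, x k ^ n k) •
        (((n i : ℝ) * x i ^ (n i - 1)) • ContinuousLinearMap.proj (R := ℝ) (φ := fun _ : Fin s => ℝ) i))
      (Pi.single j 1) = (n j : ℝ) * (∏ i, x i ^ n i) * (x j)⁻¹ := by
  rw [ContinuousLinearMap.sum_apply]
  rw [Finset.sum_eq_single j]
  · simp only [ContinuousLinearMap.smul_apply, ContinuousLinearMap.proj_apply,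
      Pi.single_eq_same, smul_eq_mul, mul_one]
    rcases Nat.eq_zero_or_pos (n j) with h | h
    · simp [h]
    · have hxj := (hx j).ne'
      have hprod : (∏ k ∈ Finset.univ.erase j, x k ^ n k) * x j ^ n j = ∏ i, x i ^ n i :=
        Finset.prod_erase_mul Finset.univ _ (Finset.mem_univ j)
      rw [← hprod]
      have hpow : x j ^ (n j - 1) * x j = x j ^ n j := by
        rw [← pow_succ, Nat.sub_add_cancel h]
      rw [← hpow]
      field_simp
  · intro b _ hb
    simp [Pi.single_eq_of_ne hb]
  · simp

end aux

/-- if `l⁽¹⁾, …, l⁽ᵗ⁾` generate the flux cone, then for any positive `κ` and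
any positive steady state `x` for `κ`, there are `p ∈ ℝ_{>0}^s` and `λ ∈ ℝ_{≥0}^t` with
`Jac_f(κ,x) = J(p,λ) = 𝒩 · diag(Σᵢ λᵢ l⁽ⁱ⁾) · 𝒳ᵀ · diag(p)`. -/
theorem jacobian_eq_transformed_jacobian {s m t : ℕ} (μ ν : Fin s → Fin m → ℕ)
    (hdiff : ∀ j, ∃ i, μ i j ≠ ν i j)
    (N : Matrix (Fin s) (Fin m) ℝ)
    (hN : ∀ i j, N i j = (ν i j : ℝ) - (μ i j : ℝ))
    (𝒳 : Matrix (Fin s) (Fin m) ℝ)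
    (h𝒳 : ∀ i j, 𝒳 i j = (μ i j : ℝ))
    (l : Fin t → Fin m → ℝ)
    (hl : ∀ i, l i ∈ fluxCone N)
    (hgen : ∀ α ∈ fluxCone N, ∃ lam : Fin t → ℝ,
      (∀ i, 0 ≤ lam i) ∧ α = ∑ i, lam i • l i)
    (κ : Fin m → ℝ) (hκ : ∀ j, 0 < κ j)
    (x : Fin s → ℝ) (hx : ∀ i, 0 < x i)
    (hss : fRate N μ κ x = 0) :
    ∃ (p : Fin s → ℝ) (lam : Fin t → ℝ),
      (∀ i, 0 < p i) ∧ (∀ i, 0 ≤ lam i) ∧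
      jacF N μ κ x =
        N * Matrix.diagonal (fun j => ∑ i, lam i * l i j) * 𝒳ᵀ *
          Matrix.diagonal p := by
  -- the rate vector is in the flux cone
  have hαcone : vRate μ κ x ∈ fluxCone N := by
    constructor
    · intro j
      exact le_of_lt (mul_pos (hκ j) (Finset.prod_pos fun i _ => pow_pos (hx i) _))
    · exact hss
  obtain ⟨lam, hlam0, hlameq⟩ := hgen _ hαcone
  refine ⟨fun i => (x i)⁻¹, lam, fun i => inv_pos.mpr (hx i), hlam0, ?_⟩
  -- compute jacobian entries
  ext i j
  have hderiv : HasFDerivAt (fun y : Fin s → ℝ => fRate N μ κ y i)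
      (∑ k, (N i k * κ k) • (∑ i', (∏ j' ∈ Finset.univ.erase i', x j' ^ μ j' k) •
        (((μ i' k : ℝ) * x i' ^ (μ i' k - 1)) • ContinuousLinearMap.proj (R := ℝ) (φ := fun _ : Fin s => ℝ) i'))) x := by
    have : (fun y : Fin s → ℝ => fRate N μ κ y i)
        = fun y => ∑ k, (N i k * κ k) * ∏ i', y i' ^ μ i' k := by
      funext y
      simp [fRate, Matrix.mulVec, dotProduct, vRate, mul_assoc]
    rw [this]
    exact HasFDerivAt.fun_sum fun k _ =>
      (monomial_hasFDerivAt (fun i' => μ i' k) x).const_mul (N i k * κ k)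
  have hjac : jacF N μ κ x i j
      = ∑ k, (N i k * κ k) * ((μ j k : ℝ) * (∏ i', x i' ^ μ i' k) * (x j)⁻¹) := by
    show fderiv ℝ (fun y : Fin s → ℝ => fRate N μ κ y i) x (Pi.single j 1) = _
    rw [hderiv.fderiv, ContinuousLinearMap.sum_apply]
    congr 1
    funext k
    rw [ContinuousLinearMap.smul_apply, monomial_deriv_apply (fun i' => μ i' k) x hx j]
    simp [smul_eq_mul]
  rw [hjac]
  -- compute RHS entry
  have hrhs : (N * Matrix.diagonal (fun j => ∑ i, lam i * l i j) * 𝒳ᵀ *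
      Matrix.diagonal (fun i => (x i)⁻¹)) i j
      = ∑ k, N i k * (∑ i', lam i' * l i' k) * 𝒳 j k * (x j)⁻¹ := by
    simp [Matrix.mul_apply, Matrix.diagonal, Matrix.transpose_apply, Finset.sum_mul]
  rw [hrhs]
  apply Finset.sum_congr rfl
  intro k _
  have hαk : κ k * ∏ i', x i' ^ μ i' k = ∑ i', lam i' * l i' k := by
    have := congrFun hlameq k
    simpa [vRate, Finset.sum_apply] using this
  rw [← hαk, h𝒳]
  ring
end

section
/- For any p ∈ ℝ_{>0}^s and any strictly positive vector α ∈ ℱ(𝒩) ∩ ℝ_{>0}^m in the flux cone, there exist rate constants κ ∈ ℝ_{>0}^m and a positive steady state x ∈ ℝ_{>0}^s for κ such that Jac_f(κ,x) = 𝒩 · diag(α) · 𝒳^⊤ · diag(p_1,…,p_s). -/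
open Matrix BigOperators

/-- Derivative of a monomial `y ↦ ∏ l, y l ^ n l`. -/
lemma hasFDerivAt_monomial {s : ℕ} (n : Fin s → ℕ) (x : Fin s → ℝ) :
    HasFDerivAt (fun y : Fin s → ℝ => ∏ l, y l ^ n l)
      (∑ l, (∏ l' ∈ Finset.univ.erase l, x l' ^ n l') •
        ((n l : ℝ) * x l ^ (n l - 1)) • (ContinuousLinearMap.proj l :
          (Fin s → ℝ) →L[ℝ] ℝ)) x := by
  exact HasFDerivAt.finset_prod (fun l _ => by
    exact (hasDerivAt_pow (n l) (x l)).comp_hasFDerivAt x (hasFDerivAt_apply l x))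


/-- fRate rows have explicit derivatives. -/
lemma hasFDerivAt_fRate {s m : ℕ} (N : Matrix (Fin s) (Fin m) ℝ)
    (μ : Fin s → Fin m → ℕ) (κ : Fin m → ℝ) (x : Fin s → ℝ) (i : Fin s) :
    HasFDerivAt (fun y : Fin s → ℝ => fRate N μ κ y i)
      (∑ k, (N i k * κ k) • (∑ l, (∏ l' ∈ Finset.univ.erase l, x l' ^ μ l' k) •
        ((μ l k : ℝ) * x l ^ (μ l k - 1)) • (ContinuousLinearMap.proj l :
          (Fin s → ℝ) →L[ℝ] ℝ))) x := by
  have : (fun y : Fin s → ℝ => fRate N μ κ y i)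
      = fun y => ∑ k, (N i k * κ k) * ∏ l, y l ^ μ l k := by
    funext y
    simp [fRate, vRate, Matrix.mulVec, dotProduct, mul_assoc]
  rw [this]
  exact HasFDerivAt.fun_sum fun k _ => (hasFDerivAt_monomial (fun l => μ l k) x).const_mul _


/-- for any positive `p ∈ ℝ_{>0}^s` and any strictly positive vector
`α ∈ ℱ(𝒩) ∩ ℝ_{>0}^m` in the flux cone, there exist positive rate constants `κ` and a
positive steady state `x` for `κ` with `Jac_f(κ,x) = 𝒩 · diag(α) · 𝒳ᵀ · diag(p)`. -/
theorem transformed_jacobian_realized {s m : ℕ} (μ ν : Fin s → Fin m → ℕ)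
    (hdiff : ∀ j, ∃ i, μ i j ≠ ν i j)
    (N : Matrix (Fin s) (Fin m) ℝ)
    (hN : ∀ i j, N i j = (ν i j : ℝ) - (μ i j : ℝ))
    (𝒳 : Matrix (Fin s) (Fin m) ℝ)
    (h𝒳 : ∀ i j, 𝒳 i j = (μ i j : ℝ))
    (p : Fin s → ℝ) (hp : ∀ i, 0 < p i)
    (α : Fin m → ℝ) (hα : α ∈ fluxCone N) (hαpos : ∀ j, 0 < α j) :
    ∃ (κ : Fin m → ℝ) (x : Fin s → ℝ),
      (∀ j, 0 < κ j) ∧ (∀ i, 0 < x i) ∧ fRate N μ κ x = 0 ∧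
      jacF N μ κ x = N * Matrix.diagonal α * 𝒳ᵀ * Matrix.diagonal p := by
  set x : Fin s → ℝ := fun i => (p i)⁻¹ with hxdef
  set κ : Fin m → ℝ := fun k => α k * ∏ l, p l ^ μ l k with hκdef
  have hκpos : ∀ k, 0 < κ k := fun k =>
    mul_pos (hαpos k) (Finset.prod_pos fun l _ => pow_pos (hp l) _)
  have hxpos : ∀ i, 0 < x i := fun i => inv_pos.mpr (hp i)
  have hv : vRate μ κ x = α := by
    funext k
    simp only [vRate, hκdef, hxdef]
    rw [mul_assoc, ← Finset.prod_mul_distrib]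
    have : ∀ l ∈ Finset.univ, p l ^ μ l k * ((p l)⁻¹) ^ μ l k = 1 := fun l _ => by
      rw [← mul_pow, mul_inv_cancel₀ (hp l).ne', one_pow]
    rw [Finset.prod_congr rfl this, Finset.prod_const_one, mul_one]
  refine ⟨κ, x, hκpos, hxpos, ?_, ?_⟩
  · simp [fRate, hv, hα.2]
  · ext i j
    have hD := hasFDerivAt_fRate N μ κ x i
    have hfd := hD.fderiv
    simp only [jacF, Matrix.of_apply, hfd]
    -- evaluate the derivative at Pi.single j 1
    simp only [ContinuousLinearMap.sum_apply, ContinuousLinearMap.smul_apply,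
      ContinuousLinearMap.proj_apply, smul_eq_mul]
    have hsingle : ∀ l : Fin s, (Pi.single j (1:ℝ) : Fin s → ℝ) l = if l = j then (1:ℝ) else 0 := by
      intro l
      by_cases h : l = j <;> simp [h, Pi.single_apply]
    have hcollapse : ∀ k, (∑ l, (∏ l' ∈ Finset.univ.erase l, x l' ^ μ l' k) *
        (((μ l k : ℝ) * x l ^ (μ l k - 1)) * (Pi.single j (1:ℝ) : Fin s → ℝ) l))
        = (∏ l' ∈ Finset.univ.erase j, x l' ^ μ l' k) *
          ((μ j k : ℝ) * x j ^ (μ j k - 1)) := by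
      intro k
      rw [Finset.sum_eq_single j]
      · simp [hsingle]
      · intro l _ hlj; simp [hsingle, hlj]
      · simp
    have key : ∀ k, κ k * ((∏ l' ∈ Finset.univ.erase j, x l' ^ μ l' k) *
        ((μ j k : ℝ) * x j ^ (μ j k - 1))) = α k * ((μ j k : ℝ) * p j) := by
      intro k
      rcases Nat.eq_zero_or_pos (μ j k) with h0 | hpos
      · simp [h0]
      · have hxj : x j ^ (μ j k - 1) * x j = x j ^ μ j k := by
          rw [← pow_succ, Nat.sub_add_cancel hpos]
        have hprod : (∏ l' ∈ Finset.univ.erase j, x l' ^ μ l' k) * x j ^ μ j k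
            = ∏ l, x l ^ μ l k := by
          rw [mul_comm, ← Finset.prod_erase_mul Finset.univ _ (Finset.mem_univ j), mul_comm]
        have hxp : x j * p j = 1 := inv_mul_cancel₀ (hp j).ne'
        have hκx : κ k * ∏ l, x l ^ μ l k = α k := by
          have := congrFun hv k
          simpa [vRate] using this
        calc κ k * ((∏ l' ∈ Finset.univ.erase j, x l' ^ μ l' k) *
              ((μ j k : ℝ) * x j ^ (μ j k - 1)))
            = (κ k * ((∏ l' ∈ Finset.univ.erase j, x l' ^ μ l' k) *
              (x j ^ (μ j k - 1) * (x j * p j)))) * (μ j k : ℝ) := by rw [hxp]; ring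
          _ = (κ k * ∏ l, x l ^ μ l k) * p j * (μ j k : ℝ) := by
              rw [← mul_assoc (x j ^ (μ j k - 1)), hxj]
              rw [show (∏ l' ∈ Finset.univ.erase j, x l' ^ μ l' k) *
                (x j ^ μ j k * p j) = ((∏ l' ∈ Finset.univ.erase j, x l' ^ μ l' k) *
                  x j ^ μ j k) * p j by ring, hprod]; ring
          _ = α k * ((μ j k : ℝ) * p j) := by rw [hκx]; ring
    have hRHS : (N * Matrix.diagonal α * 𝒳ᵀ * Matrix.diagonal p) i j
        = ∑ k, N i k * (α k * ((μ j k : ℝ) * p j)) := by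
      simp [Matrix.mul_apply, Matrix.diagonal_apply, Finset.mul_sum, h𝒳,
        Finset.sum_mul, mul_assoc, mul_comm, mul_left_comm]
    rw [hRHS]
    refine Finset.sum_congr rfl fun k _ => ?_
    rw [hcollapse k, mul_assoc, key k]
end

section
/- Let M ∈ ℝ^{s×s} be a real matrix and r ≤ s an integer with d := s − r. Suppose F ⊆ ℝ^s is an r-dimensional linear subspace containing all columns of M, and suppose ω_1,…,ω_d ∈ ℝ^s form a basis of the orthogonal complement F^⊥ that is reduced in the sense that (ω_i)_i = 1 for each i ∈ {1,…,d} and (ω_i)_j = 0 for all j < i. Let M̃ ∈ ℝ^{s×s} be the matrix whose i-th row is ω_i for 1 ≤ i ≤ d and whose i-th row is the i-th row of M for d < i ≤ s. Then det(M̃) = Σ_{I ⊆ {1,…,s}, |I| = r} det(M[I,I]), where M[I,I] denotes the principal submatrix of M with rows and columns indexed by I. -/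
open Matrix BigOperators

/-- The sum of all principal `r × r` minors of a square matrix `M`. -/
noncomputable def pminorSum {s : ℕ} (r : ℕ) (M : Matrix (Fin s) (Fin s) ℝ) : ℝ :=
  ∑ I ∈ Finset.powersetCard r (Finset.univ : Finset (Fin s)),
    Matrix.det (M.submatrix (Subtype.val : {a // a ∈ I} → Fin s)
      (Subtype.val : {a // a ∈ I} → Fin s))

open Polynomial in
/-- Row-multilinear expansion of `det (X • A + B)`; the coefficient of `X^d` is the sum over
`d`-element row sets `S` of the determinants of the mixed matrices (rows of `A` on `S`,
rows of `B` elsewhere). -/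
lemma coeff_det_aux {s : ℕ} (d : ℕ) (A B : Matrix (Fin s) (Fin s) ℝ) :
    (Matrix.det ((X : ℝ[X]) • A.map C + B.map C)).coeff d
      = ∑ S ∈ Finset.powersetCard d (Finset.univ : Finset (Fin s)),
          Matrix.det (Matrix.of fun i j => if i ∈ S then A i j else B i j) := by
  classical
  have key : Matrix.det ((X : ℝ[X]) • A.map C + B.map C)
      = ∑ S : Finset (Fin s),
          Matrix.det (S.piecewise (X • A.map C) (B.map C)) :=
    (Matrix.detRowAlternating (R := ℝ[X]) (n := Fin s)).toMultilinearMap.map_add_univ _ _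
  have hterm : ∀ S : Finset (Fin s),
      Matrix.det (S.piecewise ((X : ℝ[X]) • A.map C) (B.map C))
        = C (Matrix.det (Matrix.of fun i j => if i ∈ S then A i j else B i j)) * X ^ S.card := by
    intro S
    have hEq : S.piecewise ((X : ℝ[X]) • A.map C) (B.map C)
        = Matrix.of (fun i j => (fun i => if i ∈ S then (X : ℝ[X]) else 1) i *
            ((Matrix.of fun i j => if i ∈ S then A i j else B i j).map C) i j) := by
      ext i j
      by_cases h : i ∈ S
      · change Polynomial.coeff ((if i ∈ S then _ else _ : Fin s → ℝ[X]) j) _ = _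
        rw [if_pos h]
        simp [Finset.piecewise_eq_of_mem _ _ _ h, h, Matrix.map_apply, Matrix.smul_apply,
          smul_eq_mul]
      · change Polynomial.coeff ((if i ∈ S then _ else _ : Fin s → ℝ[X]) j) _ = _
        rw [if_neg h]
        simp [Finset.piecewise_eq_of_notMem _ _ _ h, h, Matrix.map_apply]
    rw [hEq, Matrix.det_mul_column, ← RingHom.mapMatrix_apply, ← RingHom.map_det]
    rw [Fintype.prod_ite_mem S (fun _ => (X : ℝ[X])), Finset.prod_const]
    ring
  rw [key]
  refine (congrArg (fun p => Polynomial.coeff p d) (Finset.sum_congr rfl (fun S _ => hterm S))).trans ?_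
  rw [Polynomial.finset_sum_coeff]
  simp_rw [coeff_C_mul_X_pow]
  rw [Finset.powersetCard_eq_filter, Finset.powerset_univ, Finset.sum_filter]
  exact Finset.sum_congr rfl fun S _ => by simp [eq_comm]

/-- Determinant of a matrix whose rows on `S` are the corresponding rows of the identity:
it equals the principal minor of `A` on the complement of `S`. -/
lemma det_rows_one {s : ℕ} (S : Finset (Fin s)) (A : Matrix (Fin s) (Fin s) ℝ) :
    Matrix.det (Matrix.of fun i j =>
        if i ∈ S then (1 : Matrix (Fin s) (Fin s) ℝ) i j else A i j)
      = Matrix.det (A.submatrix (Subtype.val : {a // a ∈ Sᶜ} → Fin s)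
          (Subtype.val : {a // a ∈ Sᶜ} → Fin s)) := by
  classical
  set W : Matrix (Fin s) (Fin s) ℝ := Matrix.of fun i j =>
    if i ∈ S then (1 : Matrix (Fin s) (Fin s) ℝ) i j else A i j with hW
  let e : {a : Fin s // a ∈ Sᶜ} ⊕ {a : Fin s // a ∈ S} ≃ Fin s :=
    { toFun := Sum.elim Subtype.val Subtype.val
      invFun := fun a =>
        if h : a ∈ S then Sum.inr ⟨a, h⟩ else Sum.inl ⟨a, Finset.mem_compl.mpr h⟩
      left_inv := by
        rintro (⟨a, ha⟩ | ⟨a, ha⟩)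
        · simp [Finset.mem_compl.mp ha]
        · simp [ha]
      right_inv := fun a => by by_cases h : a ∈ S <;> simp [h] }
  rw [← Matrix.det_submatrix_equiv_self e W]
  have he1 : ∀ a : {a : Fin s // a ∈ Sᶜ}, e (Sum.inl a) = (a : Fin s) := fun a => rfl
  have he2 : ∀ a : {a : Fin s // a ∈ S}, e (Sum.inr a) = (a : Fin s) := fun a => rfl
  have hblocks : W.submatrix e e
      = Matrix.fromBlocks
          (A.submatrix (Subtype.val : {a // a ∈ Sᶜ} → Fin s)
            (Subtype.val : {a // a ∈ Sᶜ} → Fin s))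
          (A.submatrix (Subtype.val : {a // a ∈ Sᶜ} → Fin s)
            (Subtype.val : {a // a ∈ S} → Fin s))
          0 1 := by
    ext i j
    rcases i with a | a <;> rcases j with b | b <;>
      simp only [Matrix.submatrix_apply, he1, he2, hW, Matrix.of_apply,
        Matrix.fromBlocks_apply₁₁, Matrix.fromBlocks_apply₁₂,
        Matrix.fromBlocks_apply₂₁, Matrix.fromBlocks_apply₂₂]
    · rw [if_neg (Finset.mem_compl.mp a.2)]
    · rw [if_neg (Finset.mem_compl.mp a.2)]
    · rw [if_pos a.2]
      have hab : (a : Fin s) ≠ (b : Fin s) := by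
        intro h
        exact (Finset.mem_compl.mp b.2) (h ▸ a.2)
      simp [Matrix.one_apply, hab]
    · rw [if_pos a.2]
      rcases eq_or_ne a b with rfl | hab
      · simp [Matrix.one_apply]
      · have : (a : Fin s) ≠ (b : Fin s) := fun h => hab (Subtype.ext h)
        simp [Matrix.one_apply, this, hab]
  rw [hblocks, Matrix.det_fromBlocks_zero₂₁, Matrix.det_one, mul_one]

open Polynomial in
/-- if the columns of `M ∈ ℝ^{s×s}` lie in an `r`-dimensional subspace `F`,
`ω₁, …, ω_d` is a reduced basis of `F^⊥` (w.r.t. the standard inner product), and `M̃` is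
obtained from `M` by replacing its first `d` rows by `ω₁, …, ω_d`, then
`det M̃ = Σ_{|I| = r} det M[I,I]`. -/
theorem det_augmented_eq_sum_principal_minors {s r : ℕ} (hrs : r ≤ s)
    (d : ℕ) (hd : d = s - r)
    (M : Matrix (Fin s) (Fin s) ℝ)
    (F : Submodule ℝ (Fin s → ℝ)) (hF : Module.finrank ℝ F = r)
    (hcol : ∀ j, (fun i => M i j) ∈ F)
    (ω : Fin d → Fin s → ℝ)
    -- each ωₖ lies in the orthogonal complement of F
    (hmem : ∀ k, ∀ u ∈ F, ∑ i, ω k i * u i = 0)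
    -- ω₁, …, ω_d are linearly independent
    (hindep : LinearIndependent ℝ ω)
    -- ω₁, …, ω_d span the orthogonal complement of F
    (hspan : ∀ w : Fin s → ℝ, (∀ u ∈ F, ∑ i, w i * u i = 0) →
      w ∈ Submodule.span ℝ (Set.range ω))
    -- reducedness: (ωₖ)ₖ = 1 and (ωₖ)ⱼ = 0 for j < k
    (hred1 : ∀ k : Fin d, ω k ⟨(k : ℕ), by have := k.isLt; omega⟩ = 1)
    (hred0 : ∀ (k : Fin d) (j : Fin s), (j : ℕ) < (k : ℕ) → ω k j = 0)
    (Mt : Matrix (Fin s) (Fin s) ℝ)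
    (hMt : ∀ i j, Mt i j =
      if h : (i : ℕ) < d then ω ⟨(i : ℕ), h⟩ j else M i j) :
    Mt.det = pminorSum r M := by
  classical
  have hds : d ≤ s := by omega
  -- the auxiliary invertible matrix `U`
  set U : Matrix (Fin s) (Fin s) ℝ := Matrix.of fun i j =>
    if h : (i : ℕ) < d then ω ⟨(i : ℕ), h⟩ j else if i = j then 1 else 0 with hU
  -- `U` is upper triangular with unit diagonal
  have hdetU : U.det = 1 := by
    rw [Matrix.det_of_upperTriangular]
    · apply Finset.prod_eq_one
      intro i _
      by_cases h : (i : ℕ) < d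
      · have := hred1 ⟨(i : ℕ), h⟩
        simpa [hU, h] using this
      · simp [hU, h]
    · intro i j hji
      by_cases h : (i : ℕ) < d
      · have : (j : ℕ) < (i : ℕ) := hji
        simpa [hU, h] using hred0 ⟨(i : ℕ), h⟩ j this
      · have : i ≠ j := by
          intro hij
          exact absurd hji (by simp [hij])
        simp [hU, h, this]
  -- the rows of `U * M`
  have hUM : ∀ i j, (U * M) i j = if (i : ℕ) < d then 0 else M i j := by
    intro i j
    rw [Matrix.mul_apply]
    by_cases h : (i : ℕ) < d
    · rw [if_pos h]
      have := hmem ⟨(i : ℕ), h⟩ (fun k => M k j) (hcol j)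
      simpa [hU, h] using this
    · rw [if_neg h]
      have : ∀ k, U i k * M k j = (if i = k then M k j else 0) := by
        intro k
        rcases eq_or_ne i k with rfl | hik
        · simp [hU, h]
        · simp [hU, h, hik]
      simp_rw [this]
      simp
  -- the index set of the first `d` rows
  set D : Finset (Fin s) := Finset.map (Fin.castLEEmb hds) Finset.univ with hDdef
  have hDmem : ∀ i : Fin s, i ∈ D ↔ (i : ℕ) < d := by
    intro i
    constructor
    · rintro hi
      rw [hDdef, Finset.mem_map] at hi
      obtain ⟨k, -, hk⟩ := hi
      subst hk
      simpa using k.isLt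
    · intro hi
      rw [hDdef, Finset.mem_map]
      exact ⟨⟨(i : ℕ), hi⟩, Finset.mem_univ _, by ext; simp⟩
  have hDcard : D.card = d := by
    rw [hDdef, Finset.card_map, Finset.card_univ, Fintype.card_fin]
  -- the key polynomial identity
  have key : (Matrix.det ((X : ℝ[X]) • U.map C + (U * M).map C)).coeff d
      = (Matrix.det ((X : ℝ[X]) • (1 : Matrix (Fin s) (Fin s) ℝ).map C + M.map C)).coeff d := by
    congr 1
    have heq : (X : ℝ[X]) • U.map C + (U * M).map C
        = (U.map C) * ((X : ℝ[X]) • (1 : Matrix (Fin s) (Fin s) ℝ).map C + M.map C) := by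
      rw [Matrix.map_one C (map_zero C) (map_one C), mul_add, Matrix.mul_smul, mul_one,
        ← Matrix.map_mul]
    rw [heq, Matrix.det_mul, ← RingHom.mapMatrix_apply, ← RingHom.map_det, hdetU, Polynomial.C_1,
      one_mul]
  rw [coeff_det_aux, coeff_det_aux] at key
  -- the left side is `det Mt`
  have hleft : ∑ S ∈ Finset.powersetCard d (Finset.univ : Finset (Fin s)),
      Matrix.det (Matrix.of fun i j => if i ∈ S then U i j else (U * M) i j) = Mt.det := by
    rw [Finset.sum_eq_single_of_mem D]
    · congr 1
      ext i j
      rw [hMt]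
      simp only [Matrix.of_apply]
      by_cases h : (i : ℕ) < d
      · rw [if_pos ((hDmem i).mpr h), dif_pos h]
        simp [hU, h]
      · rw [if_neg (fun hi => h ((hDmem i).mp hi)), dif_neg h, hUM, if_neg h]
    · rw [Finset.mem_powersetCard_univ]
      exact hDcard
    · intro S hS hSD
      rw [Finset.mem_powersetCard_univ] at hS
      have hnsub : ¬ D ⊆ S := by
        intro hsub
        exact hSD (Finset.eq_of_subset_of_card_le hsub (by rw [hS, hDcard])).symm
      obtain ⟨i, hiD, hiS⟩ := Finset.not_subset.mp hnsub
      apply Matrix.det_eq_zero_of_row_eq_zero i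
      intro j
      simp only [Matrix.of_apply, if_neg hiS]
      rw [hUM, if_pos ((hDmem i).mp hiD)]
  -- the right side is `pminorSum r M`
  have hright : ∑ S ∈ Finset.powersetCard d (Finset.univ : Finset (Fin s)),
      Matrix.det (Matrix.of fun i j =>
        if i ∈ S then (1 : Matrix (Fin s) (Fin s) ℝ) i j else M i j) = pminorSum r M := by
    rw [pminorSum]
    refine Finset.sum_bij' (fun S _ => Sᶜ) (fun I _ => Iᶜ) ?_ ?_ ?_ ?_ ?_
    · intro S hS
      rw [Finset.mem_powersetCard_univ] at hS ⊢
      rw [Finset.card_compl, Fintype.card_fin, hS]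
      omega
    · intro I hI
      rw [Finset.mem_powersetCard_univ] at hI ⊢
      rw [Finset.card_compl, Fintype.card_fin, hI]
      omega
    · intro S _
      simp
    · intro I _
      simp
    · intro S _
      exact det_rows_one S M
  rw [hleft, hright] at key
  exact key
end

section
/- Let M ∈ ℝ^{s×s} be a real matrix all of whose columns lie in an r-dimensional linear subspace F ⊆ ℝ^s. Then M maps F into F, and the sum Σ_{I ⊆ {1,…,s}, |I| = r} det(M[I,I]) of all principal r×r minors of M equals the determinant of the restriction of M to F, regarded as a linear endomorphism of F. In particular, this sum is nonzero if and only if the restriction of M to F is a bijection of F. -/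
open Matrix BigOperators

section Aux

open Polynomial

variable {n : Type*} [Fintype n] [DecidableEq n] {R : Type*} [CommRing R]

lemma det_piecewise_one (M : Matrix n n R) (t : Finset n) :
    Matrix.det (t.piecewise M (1 : Matrix n n R)) =
      Matrix.det (M.submatrix (Subtype.val : {a // a ∈ t} → n)
        (Subtype.val : {a // a ∈ t} → n)) := by
  classical
  let e : {a // a ∈ t} ⊕ {a // ¬ a ∈ t} ≃ n := Equiv.sumCompl (· ∈ t)
  refine (Matrix.det_submatrix_equiv_self e _).symm.trans ?_
  have hsub : Matrix.submatrix (t.piecewise M (1 : Matrix n n R)) e e =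
      Matrix.fromBlocks
        (M.submatrix (Subtype.val : {a // a ∈ t} → n) Subtype.val)
        (M.submatrix (Subtype.val : {a // a ∈ t} → n) Subtype.val) 0 1 := by
    ext i j
    cases i with
    | inl a =>
      cases j with
      | inl b => simp [e, Finset.piecewise, a.2, Matrix.submatrix, Matrix.of_apply]
      | inr b => simp [e, Finset.piecewise, a.2, Matrix.submatrix, Matrix.of_apply]
    | inr a =>
      cases j with
      | inl b =>
        have hne : (a : n) ≠ (b : n) := fun h => a.2 (h ▸ b.2)
        simp [e, Finset.piecewise, a.2, Matrix.one_apply, hne, Matrix.submatrix, Matrix.of_apply]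
      | inr b =>
        simp [e, Finset.piecewise, a.2, Matrix.one_apply, Subtype.ext_iff, Matrix.submatrix, Matrix.of_apply]
        exact if_congr Iff.rfl rfl rfl
  rw [hsub, Matrix.det_fromBlocks_zero₂₁, Matrix.det_one, mul_one]

lemma det_one_add_X_smul_map (M : Matrix n n R) :
    Matrix.det (1 + (Polynomial.X : R[X]) • M.map (Polynomial.C : R → R[X])) =
      ∑ t : Finset n,
        Polynomial.C (Matrix.det (M.submatrix (Subtype.val : {a // a ∈ t} → n)
          (Subtype.val : {a // a ∈ t} → n))) * (Polynomial.X : R[X]) ^ t.card := by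
  classical
  have h0 : Matrix.det (1 + (Polynomial.X : R[X]) • M.map (Polynomial.C : R → R[X])) =
      (Matrix.detRowAlternating :
        (n → R[X]) [⋀^n]→ₗ[R[X]] R[X]).toMultilinearMap
        ((((Polynomial.X : R[X]) • M.map (Polynomial.C : R → R[X])) : Matrix n n R[X]) + (1 : Matrix n n R[X])) := by
    rw [add_comm]; rfl
  rw [h0]
  refine (MultilinearMap.map_add_univ _ _ _).trans ?_
  refine Finset.sum_congr rfl fun t _ => ?_
  have h1 : t.piecewise ((Polynomial.X : R[X]) • M.map (Polynomial.C : R → R[X]))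
        (1 : Matrix n n R[X]) =
      t.piecewise (fun i => (Polynomial.X : R[X]) •
          (t.piecewise (M.map (Polynomial.C : R → R[X])) (1 : Matrix n n R[X])) i)
        (t.piecewise (M.map (Polynomial.C : R → R[X])) (1 : Matrix n n R[X])) := by
    ext i j
    by_cases hi : i ∈ t <;> simp [Finset.piecewise, hi]
  rw [h1, MultilinearMap.map_piecewise_smul]
  have h2 : t.piecewise (M.map (Polynomial.C : R → R[X])) (1 : Matrix n n R[X]) =
      Matrix.map (t.piecewise M (1 : Matrix n n R)) (Polynomial.C : R → R[X]) := by
    ext i j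
    by_cases hi : i ∈ t <;>
      simp [Finset.piecewise, hi, Matrix.one_apply, apply_ite (Polynomial.C : R → R[X]), Matrix.map, Matrix.of_apply]
  have h3 : (Matrix.detRowAlternating :
      (n → R[X]) [⋀^n]→ₗ[R[X]] R[X]).toMultilinearMap
        (t.piecewise (M.map (Polynomial.C : R → R[X])) (1 : Matrix n n R[X])) =
      Polynomial.C (Matrix.det (t.piecewise M (1 : Matrix n n R))) := by
    show Matrix.det _ = _
    rw [h2]
    exact (RingHom.map_det (Polynomial.C : R →+* R[X]) (t.piecewise M (1 : Matrix n n R))).symm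
  rw [h3, det_piecewise_one, Finset.prod_const, smul_eq_mul, mul_comm]

end Aux

open Polynomial in
lemma pminor_cauchy_binet {s r : ℕ} (B : Matrix (Fin s) (Fin r) ℝ)
    (N : Matrix (Fin r) (Fin s) ℝ) :
    pminorSum r (B * N) = Matrix.det (N * B) := by
  classical
  have key : Matrix.det (1 + (Polynomial.X : ℝ[X]) • (B * N).map (Polynomial.C : ℝ → ℝ[X])) =
      Matrix.det (1 + (Polynomial.X : ℝ[X]) • (N * B).map (Polynomial.C : ℝ → ℝ[X])) := by
    have h1 : (B.map (Polynomial.C : ℝ → ℝ[X])) *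
        ((Polynomial.X : ℝ[X]) • N.map (Polynomial.C : ℝ → ℝ[X])) =
        (Polynomial.X : ℝ[X]) • (B * N).map (Polynomial.C : ℝ → ℝ[X]) := by
      rw [Matrix.mul_smul, Matrix.map_mul]
    have h2 : ((Polynomial.X : ℝ[X]) • N.map (Polynomial.C : ℝ → ℝ[X])) *
        (B.map (Polynomial.C : ℝ → ℝ[X])) =
        (Polynomial.X : ℝ[X]) • (N * B).map (Polynomial.C : ℝ → ℝ[X]) := by
      rw [Matrix.smul_mul, Matrix.map_mul]
    rw [← h1, ← h2, Matrix.det_one_add_mul_comm]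
  rw [det_one_add_X_smul_map, det_one_add_X_smul_map] at key
  have key2 := congrArg (fun p : ℝ[X] => p.coeff r) key
  simp only [Polynomial.finset_sum_coeff, Polynomial.coeff_C_mul_X_pow] at key2
  have hL : ∑ t : Finset (Fin s),
      (if r = t.card then
        Matrix.det ((B * N).submatrix (Subtype.val : {a // a ∈ t} → Fin s)
          (Subtype.val : {a // a ∈ t} → Fin s)) else 0) = pminorSum r (B * N) := by
    have hpc : Finset.powersetCard r (Finset.univ : Finset (Fin s)) =
        Finset.univ.filter (fun t : Finset (Fin s) => r = t.card) := by
      rw [Finset.powersetCard_eq_filter, Finset.powerset_univ]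
      exact Finset.filter_congr fun t _ => by simp [eq_comm]
    rw [pminorSum, hpc, Finset.sum_filter]
  have hR : ∑ t : Finset (Fin r),
      (if r = t.card then
        Matrix.det ((N * B).submatrix (Subtype.val : {a // a ∈ t} → Fin r)
          (Subtype.val : {a // a ∈ t} → Fin r)) else 0) = Matrix.det (N * B) := by
    rw [Finset.sum_eq_single (Finset.univ : Finset (Fin r))]
    · have hcard : r = (Finset.univ : Finset (Fin r)).card := by simp
      rw [if_pos hcard]
      have he : (Subtype.val : {a // a ∈ (Finset.univ : Finset (Fin r))} → Fin r) =
          ⇑(Equiv.subtypeUnivEquiv (fun x : Fin r => Finset.mem_univ x)) := rfl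
      rw [he, Matrix.det_submatrix_equiv_self]
    · intro t _ ht
      have hlt : t.card < r := by
        have := Finset.card_lt_card (Finset.ssubset_univ_iff.mpr ht)
        simpa using this
      exact if_neg (by omega)
    · intro h; exact absurd (Finset.mem_univ _) h
  rw [← hL, ← hR]
  exact key2


/-- if all columns of `M ∈ ℝ^{s×s}` lie in an `r`-dimensional subspace `F`,
then `M` maps `F` into `F`, the sum of all principal `r × r` minors of `M` equals the
determinant of the restriction of `M` to `F` (as a linear endomorphism of `F`), and this
sum is nonzero iff the restriction of `M` to `F` is a bijection of `F`. -/
theorem sum_principal_minors_eq_det_restriction {s r : ℕ}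
    (M : Matrix (Fin s) (Fin s) ℝ)
    (F : Submodule ℝ (Fin s → ℝ)) (hF : Module.finrank ℝ F = r)
    (hcol : ∀ j, (fun i => M i j) ∈ F) :
    ∃ h : ∀ u ∈ F, M.mulVecLin u ∈ F,
      pminorSum r M = LinearMap.det (M.mulVecLin.restrict h) ∧
      (pminorSum r M ≠ 0 ↔ Function.Bijective (M.mulVecLin.restrict h)) := by
  classical
  have h : ∀ u ∈ F, M.mulVecLin u ∈ F := by
    intro u hu
    have huv : M.mulVecLin u = ∑ j, u j • (fun i => M i j) := by
      funext i
      simp [Matrix.mulVecLin_apply, Matrix.mulVec, dotProduct, Finset.sum_apply, mul_comm]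
    rw [huv]
    exact Submodule.sum_mem _ fun j _ => Submodule.smul_mem _ _ (hcol j)
  refine ⟨h, ?_⟩
  let b : Module.Basis (Fin r) ℝ F := Module.finBasisOfFinrankEq ℝ F hF
  let B : Matrix (Fin s) (Fin r) ℝ := fun i k => (b k : Fin s → ℝ) i
  let N : Matrix (Fin r) (Fin s) ℝ := fun k j => b.repr ⟨fun i => M i j, hcol j⟩ k
  have hM : M = B * N := by
    ext i j
    have h1 := b.sum_repr ⟨fun i => M i j, hcol j⟩
    have h2 : ((∑ k, b.repr ⟨fun i => M i j, hcol j⟩ k • b k : F) : Fin s → ℝ) i = M i j := by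
      rw [h1]
    rw [Matrix.mul_apply]
    conv_lhs => rw [← h2]
    simp only [Submodule.coe_sum, Submodule.coe_smul, Finset.sum_apply, Pi.smul_apply, smul_eq_mul, B, N, mul_comm]
  have hrestrict : M.mulVecLin.restrict h = Matrix.toLin b b (N * B) := by
    apply b.ext
    intro k
    rw [Matrix.toLin_self]
    apply Subtype.ext
    have hc : ((∑ i, (N * B) i k • b i : F) : Fin s → ℝ) = fun i0 => (B * (N * B)) i0 k := by
      funext i0
      rw [Matrix.mul_apply (M := B)]
      simp [Submodule.coe_sum, B, mul_comm]
    rw [hc]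
    have hd : ((M.mulVecLin.restrict h) (b k) : Fin s → ℝ) = M.mulVec (b k : Fin s → ℝ) := rfl
    rw [hd]
    funext i0
    have hA : M.mulVec (b k : Fin s → ℝ) i0 = (M * B) i0 k := by
      rw [Matrix.mul_apply]
      simp [Matrix.mulVec, Matrix.mul_apply, dotProduct, B]
    rw [hA, hM, Matrix.mul_assoc]
  have hdet : pminorSum r M = LinearMap.det (M.mulVecLin.restrict h) := by
    rw [hrestrict, LinearMap.det_toLin]
    calc pminorSum r M = pminorSum r (B * N) := by rw [← hM]
      _ = Matrix.det (N * B) := pminor_cauchy_binet B N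
  refine ⟨hdet, ?_⟩
  constructor
  · intro hne
    rw [hdet] at hne
    have hcoe : ⇑(LinearMap.equivOfDetNeZero (M.mulVecLin.restrict h) hne) =
        ⇑(M.mulVecLin.restrict h) := by funext x; rfl
    rw [← hcoe]
    exact (LinearMap.equivOfDetNeZero _ hne).bijective
  · intro hbij
    rw [hdet]
    have hu : IsUnit (M.mulVecLin.restrict h) := (Module.End.isUnit_iff _).mpr hbij
    exact isUnit_iff_ne_zero.mp (LinearMap.isUnit_det _ hu)
end

section
/- Let W ∈ ℝ^{d×s} be a row-reduced matrix whose rows form a basis of S^⊥, with pivot columns i_1 < … < i_d (that is, W_{k,i_k} = 1, W_{k,j} = 0 for j < i_k, and W_{l,i_k} = 0 for l ≠ k). For c ∈ ℝ^d define h = (h_1,…,h_s) by h_{i_k} = (Wx − c)_k for k ∈ {1,…,d} and h_i = f_i(κ,x) for i ∉ {i_1,…,i_d}. Then for every κ ∈ ℝ_{>0}^m, every x ∈ ℝ_{>0}^s and every c ∈ ℝ^d, det(Jac_h(κ,x)) = Σ_{I ⊆ {1,…,s}, |I| = r} det(Jac_f(κ,x)[I,I]), where Jac_h and Jac_f are the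 Jacobian matrices of h and f with respect to x. -/
open Matrix BigOperators

/-- The steady-state system augmented by conservation laws: `h_{i_k} = (W x - c)_k` for the
pivot indices `i_k = piv k`, and `h_i = f_i(κ, x)` otherwise. -/
noncomputable def hFun {s m d : ℕ} (N : Matrix (Fin s) (Fin m) ℝ)
    (μ : Fin s → Fin m → ℕ) (W : Matrix (Fin d) (Fin s) ℝ)
    (piv : Fin d → Fin s) (c : Fin d → ℝ) (κ : Fin m → ℝ)
    (x : Fin s → ℝ) : Fin s → ℝ :=
  fun i =>
    if h : ∃ k, piv k = i then (W.mulVec x - c) (Classical.choose h)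
    else fRate N μ κ x i

/-- Jacobian matrix of `h(κ, ·)` at `x`. -/
noncomputable def jacH {s m d : ℕ} (N : Matrix (Fin s) (Fin m) ℝ)
    (μ : Fin s → Fin m → ℕ) (W : Matrix (Fin d) (Fin s) ℝ)
    (piv : Fin d → Fin s) (c : Fin d → ℝ) (κ : Fin m → ℝ)
    (x : Fin s → ℝ) : Matrix (Fin s) (Fin s) ℝ :=
  Matrix.of fun i j =>
    fderiv ℝ (fun y : Fin s → ℝ => hFun N μ W piv c κ y i) x (Pi.single j 1)

section CauchyBinet

open Equiv Finset

private lemma cb_zero {r s : ℕ} (B : Matrix (Fin r) (Fin s) ℝ) (A : Matrix (Fin s) (Fin r) ℝ)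
    {p : Fin r → Fin s} (H : ¬Function.Injective p) :
    (∑ σ : Equiv.Perm (Fin r), (Equiv.Perm.sign σ : ℝ) * ∏ i, B (σ i) (p i) * A (p i) i) = 0 := by
  obtain ⟨i, j, hpij, hij⟩ : ∃ i j, p i = p j ∧ i ≠ j := by
    rw [Function.Injective] at H
    push_neg at H
    obtain ⟨i, j, h1, h2⟩ := H
    exact ⟨i, j, h1, h2⟩
  exact
    Finset.sum_involution (fun σ _ => σ * Equiv.swap i j)
      (fun σ _ => by
        have : (∏ x, B (σ x) (p x)) = ∏ x, B ((σ * Equiv.swap i j) x) (p x) :=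
          Fintype.prod_equiv (Equiv.swap i j) _ _ (by simp [Equiv.apply_swap_eq_self hpij])
        simp [this, Equiv.Perm.sign_swap hij, -Equiv.Perm.sign_swap', prod_mul_distrib])
      (fun σ _ _ => (not_congr Equiv.mul_swap_eq_iff).mpr hij)
      (fun _ _ => Finset.mem_univ _)
      (fun σ _ => Equiv.mul_swap_involutive i j σ)

private lemma det_mul_expand {r : ℕ} (M N : Matrix (Fin r) (Fin r) ℝ) :
    Matrix.det (M * N) = ∑ τ : Equiv.Perm (Fin r), ∑ σ : Equiv.Perm (Fin r),
      (Equiv.Perm.sign σ : ℝ) * ∏ i, M (σ i) (τ i) * N (τ i) i :=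
  calc
    det (M * N) = ∑ p : Fin r → Fin r, ∑ σ : Equiv.Perm (Fin r),
        (Equiv.Perm.sign σ : ℝ) * ∏ i, M (σ i) (p i) * N (p i) i := by
      simp only [det_apply', mul_apply, prod_univ_sum, mul_sum, Fintype.piFinset_univ]
      rw [Finset.sum_comm]
    _ = ∑ p ∈ Finset.univ.filter (fun p : Fin r → Fin r => Function.Bijective p),
        ∑ σ : Equiv.Perm (Fin r),
        (Equiv.Perm.sign σ : ℝ) * ∏ i, M (σ i) (p i) * N (p i) i := by
      refine (Finset.sum_subset (filter_subset _ _) fun f _ hbij ↦ cb_zero M N fun hinj ↦ ?_).symm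
      have hnb : ¬Function.Bijective f := by
        simpa only [true_and, mem_filter, mem_univ] using hbij
      exact hnb (Finite.injective_iff_bijective.mp hinj)
    _ = ∑ τ : Equiv.Perm (Fin r), ∑ σ : Equiv.Perm (Fin r),
        (Equiv.Perm.sign σ : ℝ) * ∏ i, M (σ i) (τ i) * N (τ i) i :=
      Finset.sum_bij (fun p h ↦ Equiv.ofBijective p (Finset.mem_filter.1 h).2)
        (fun _ _ ↦ Finset.mem_univ _)
        (fun _ _ _ _ h ↦ by injection h)
        (fun b _ ↦ ⟨b, Finset.mem_filter.2 ⟨Finset.mem_univ _, b.bijective⟩,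
          Equiv.coe_fn_injective rfl⟩) fun _ _ ↦ rfl

/-- A Cauchy–Binet-type identity: the determinant of `B * A` equals the sum of all
principal `r × r` minors of `A * B`. -/
private lemma cauchy_binet {r s : ℕ} (A : Matrix (Fin s) (Fin r) ℝ) (B : Matrix (Fin r) (Fin s) ℝ) :
    Matrix.det (B * A) = ∑ I ∈ Finset.powersetCard r (Finset.univ : Finset (Fin s)),
      Matrix.det ((A * B).submatrix (Subtype.val : {a // a ∈ I} → Fin s)
        (Subtype.val : {a // a ∈ I} → Fin s)) := by
  have expand : det (B * A) = ∑ p : Fin r → Fin s, ∑ σ : Equiv.Perm (Fin r),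
      (Equiv.Perm.sign σ : ℝ) * ∏ i, B (σ i) (p i) * A (p i) i := by
    simp only [det_apply', mul_apply, prod_univ_sum, mul_sum, Fintype.piFinset_univ]
    rw [Finset.sum_comm]
  rw [expand]
  have step2 : (∑ p : Fin r → Fin s, ∑ σ : Equiv.Perm (Fin r),
      (Equiv.Perm.sign σ : ℝ) * ∏ i, B (σ i) (p i) * A (p i) i)
      = ∑ p ∈ Finset.univ.filter (fun p : Fin r → Fin s => Function.Injective p),
        ∑ σ : Equiv.Perm (Fin r),
        (Equiv.Perm.sign σ : ℝ) * ∏ i, B (σ i) (p i) * A (p i) i := by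
    refine (Finset.sum_subset (filter_subset _ _) fun f _ hinj ↦ cb_zero B A ?_).symm
    simpa only [true_and, mem_filter, mem_univ] using hinj
  rw [step2]
  rw [← Finset.sum_fiberwise_of_maps_to (g := fun p : Fin r → Fin s => Finset.image p Finset.univ)
    (t := Finset.powersetCard r (Finset.univ : Finset (Fin s)))
    (fun p hp => by
      rw [Finset.mem_powersetCard_univ, Finset.card_image_of_injective _
        (by simpa using hp), Finset.card_univ, Fintype.card_fin])]
  refine Finset.sum_congr rfl fun I hI => ?_
  have hIc : I.card = r := (Finset.mem_powersetCard_univ.mp hI)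
  set e := I.orderIsoOfFin hIc with he
  set q : Fin r → Fin s := fun k => (e k : Fin s) with hq
  have hqinj : Function.Injective q := fun a b hab => by
    apply e.injective; exact Subtype.ext hab
  have himg : Finset.image q Finset.univ = I := by
    ext a
    simp only [Finset.mem_image, Finset.mem_univ, true_and]
    constructor
    · rintro ⟨k, rfl⟩; exact (e k).2
    · intro ha; exact ⟨e.symm ⟨a, ha⟩, by simp [hq]⟩
  have fiber : (∑ p ∈ (Finset.univ.filter (fun p : Fin r → Fin s => Function.Injective p)).filter
        (fun p => Finset.image p Finset.univ = I),
        ∑ σ : Equiv.Perm (Fin r), (Equiv.Perm.sign σ : ℝ) * ∏ i, B (σ i) (p i) * A (p i) i)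
      = ∑ τ : Equiv.Perm (Fin r), ∑ σ : Equiv.Perm (Fin r),
        (Equiv.Perm.sign σ : ℝ) * ∏ i, B (σ i) (q (τ i)) * A (q (τ i)) i := by
    refine (Finset.sum_bij (fun (τ : Equiv.Perm (Fin r)) _ => q ∘ τ) ?_ ?_ ?_ ?_).symm
    · intro τ _
      simp only [Finset.mem_filter, Finset.mem_univ, true_and]
      constructor
      · exact hqinj.comp τ.injective
      · rw [← Finset.image_image, Finset.image_univ_equiv]
        exact himg
    · intro τ1 _ τ2 _ h
      exact Equiv.coe_fn_injective (funext fun k => hqinj (congrFun h k))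
    · intro p hp
      simp only [Finset.mem_filter, Finset.mem_univ, true_and] at hp
      obtain ⟨hpinj, hpimg⟩ := hp
      have hmem : ∀ k, p k ∈ I := fun k => by
        rw [← hpimg]; exact Finset.mem_image_of_mem _ (Finset.mem_univ k)
      have t0inj : Function.Injective (fun k => e.symm ⟨p k, hmem k⟩) := by
        intro a b hab
        apply hpinj
        have := congrArg (fun z => (e z : Fin s)) hab
        simpa using this
      refine ⟨Equiv.ofBijective _ (Finite.injective_iff_bijective.mp t0inj), Finset.mem_univ _, ?_⟩
      funext k
      simp [hq, Equiv.ofBijective_apply]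
    · intro τ _; rfl
  rw [fiber]
  have key := det_mul_expand (B.submatrix id q) (A.submatrix q id)
  simp only [Matrix.submatrix_apply, id_eq] at key
  rw [← key, Matrix.det_mul, mul_comm, ← Matrix.det_mul]
  have h1 : (A.submatrix q id) * (B.submatrix id q) = (A * B).submatrix q q := by
    have := Matrix.submatrix_mul_equiv A B q (Equiv.refl (Fin r)) q
    simpa using this
  rw [h1]
  have h2 : (A * B).submatrix q q = ((A * B).submatrix (Subtype.val : {a // a ∈ I} → Fin s)
      (Subtype.val : {a // a ∈ I} → Fin s)).submatrix e.toEquiv e.toEquiv := by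
    ext i j; rfl
  rw [h2, Matrix.det_submatrix_equiv_self]

end CauchyBinet

/-- for a row-reduced conservation-law matrix `W` with pivot columns
`i_1 < ⋯ < i_d` and the augmented system `h`, the determinant of `Jac_h(κ,x)` equals the
sum of all principal `r × r` minors of `Jac_f(κ,x)`. -/
theorem det_jacobian_augmented_eq_sum_principal_minors
    {s m r d : ℕ} (μ ν : Fin s → Fin m → ℕ)
    (hdiff : ∀ j, ∃ i, μ i j ≠ ν i j)
    (N : Matrix (Fin s) (Fin m) ℝ)
    (hN : ∀ i j, N i j = (ν i j : ℝ) - (μ i j : ℝ))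
    -- S is the stoichiometric subspace: the span of the columns of 𝒩
    (S : Submodule ℝ (Fin s → ℝ))
    (hS : S = Submodule.span ℝ (Set.range Nᵀ))
    (hr : Module.finrank ℝ S = r) (hd : d = s - r)
    (W : Matrix (Fin d) (Fin s) ℝ)
    -- the rows of W are orthogonal to S
    (horth : ∀ k, ∀ u ∈ S, ∑ i, W k i * u i = 0)
    -- the rows of W are linearly independent
    (hindep : LinearIndependent ℝ (fun k : Fin d => W k))
    -- the rows of W span the orthogonal complement of S
    (hspan : ∀ w : Fin s → ℝ, (∀ u ∈ S, ∑ i, w i * u i = 0) →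
      w ∈ Submodule.span ℝ (Set.range fun k : Fin d => W k))
    -- pivot columns i_1 < ⋯ < i_d: W is row-reduced
    (piv : Fin d → Fin s) (hpiv : StrictMono piv)
    (hpiv1 : ∀ k, W k (piv k) = 1)
    (hpiv0 : ∀ (k : Fin d) (j : Fin s), (j : ℕ) < (piv k : ℕ) → W k j = 0)
    (hpivcol : ∀ k l : Fin d, l ≠ k → W l (piv k) = 0)
    (κ : Fin m → ℝ) (hκ : ∀ j, 0 < κ j)
    (x : Fin s → ℝ) (hx : ∀ i, 0 < x i) (c : Fin d → ℝ) :
    (jacH N μ W piv c κ x).det = pminorSum r (jacF N μ κ x) := by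
  classical
  -- differentiability of the rate functions
  have hvdiff : ∀ l, Differentiable ℝ (fun y : Fin s → ℝ => vRate μ κ y l) := by
    intro l
    have hbase : ∀ i : Fin s, Differentiable ℝ (fun y : Fin s → ℝ => y i) :=
      fun i y => (hasFDerivAt_apply i y).differentiableAt
    have hprod : Differentiable ℝ (fun y : Fin s → ℝ => ∏ i, y i ^ μ i l) := by
      intro y
      have := HasFDerivAt.finset_prod (u := Finset.univ)
        (g := fun (i : Fin s) (y : Fin s → ℝ) => y i ^ μ i l)
        (g' := fun i => fderiv ℝ (fun y : Fin s → ℝ => y i ^ μ i l) y)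
        (x := y) (fun i _ => ((hbase i y).pow (μ i l)).hasFDerivAt)
      exact this.differentiableAt
    exact hprod.const_mul (κ l)
  -- the Jacobian matrix of f factors through N
  set D : Matrix (Fin m) (Fin s) ℝ :=
    Matrix.of fun l j => fderiv ℝ (fun y : Fin s → ℝ => vRate μ κ y l) x (Pi.single j 1)
    with hDdef
  have hJf : ∀ i j, jacF N μ κ x i j = ∑ l, N i l * D l j := by
    intro i j
    have h1 : (fun y : Fin s → ℝ => fRate N μ κ y i)
        = fun y : Fin s → ℝ => ∑ l, N i l * vRate μ κ y l := by
      funext y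
      simp [fRate, Matrix.mulVec, dotProduct]
    have h2 : HasFDerivAt (fun y : Fin s → ℝ => ∑ l, N i l * vRate μ κ y l)
        (∑ l, N i l • fderiv ℝ (fun y : Fin s → ℝ => vRate μ κ y l) x) x := by
      apply HasFDerivAt.fun_sum
      intro l _
      exact ((hvdiff l) x).hasFDerivAt.const_mul (N i l)
    simp only [jacF, Matrix.of_apply]
    rw [h1, h2.fderiv]
    simp [hDdef, ContinuousLinearMap.sum_apply]
  -- the columns of jacF lie in S
  have hcolS : ∀ j, (fun i => jacF N μ κ x i j) ∈ S := by
    intro j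
    have hcol : (fun i => jacF N μ κ x i j) = ∑ l, D l j • Nᵀ l := by
      funext i
      simp only [hJf i j, Finset.sum_apply, Pi.smul_apply, Matrix.transpose_apply, smul_eq_mul]
      exact Finset.sum_congr rfl fun l _ => mul_comm _ _
    rw [hS, hcol]
    exact Submodule.sum_mem _ fun l _ =>
      Submodule.smul_mem _ _ (Submodule.subset_span ⟨l, rfl⟩)
  -- a basis of S and the factorization jacF = A * B
  let b : Module.Basis (Fin r) ℝ S := Module.finBasisOfFinrankEq ℝ S hr
  set A : Matrix (Fin s) (Fin r) ℝ := Matrix.of fun i k => ((b k : Fin s → ℝ)) i with hAdef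
  set B : Matrix (Fin r) (Fin s) ℝ :=
    Matrix.of fun k j => b.repr ⟨fun i => jacF N μ κ x i j, hcolS j⟩ k with hBdef
  have hAB : jacF N μ κ x = A * B := by
    ext i j
    have h0 := b.sum_repr ⟨fun i => jacF N μ κ x i j, hcolS j⟩
    have h1 : (∑ k, (b.repr ⟨fun i => jacF N μ κ x i j, hcolS j⟩ k) • ((b k : Fin s → ℝ)))
        = fun i => jacF N μ κ x i j := by
      have := congrArg (Subtype.val) h0
      simp only [AddSubmonoidClass.coe_finsetSum, SetLike.val_smul] at this
      exact this
    have h2 := congrFun h1 i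
    simp only [Finset.sum_apply, Pi.smul_apply, smul_eq_mul] at h2
    rw [Matrix.mul_apply, ← h2]
    exact Finset.sum_congr rfl fun k _ => (mul_comm _ _)
  -- the pivot indicator matrix E
  set E : Matrix (Fin s) (Fin d) ℝ := Matrix.of fun i k => if piv k = i then (1 : ℝ) else 0
    with hEdef
  have hpivinj : Function.Injective piv := hpiv.injective
  have hWE : W * E = 1 := by
    ext k l
    rw [Matrix.mul_apply]
    simp only [hEdef, Matrix.of_apply, mul_ite, mul_one, mul_zero]
    rw [Finset.sum_ite_eq Finset.univ (piv l) (fun i => W k i)]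
    simp only [Finset.mem_univ, if_true]
    rcases eq_or_ne k l with rfl | hkl
    · simp [hpiv1 k, Matrix.one_apply]
    · simp [Matrix.one_apply, hkl, hpivcol l k hkl]
  have hWA : W * A = 0 := by
    ext k k'
    rw [Matrix.mul_apply]
    have := horth k ((b k' : Fin s → ℝ)) (b k').2
    simpa [hAdef] using this
  -- the rows of jacH
  have hHpiv : ∀ (k : Fin d) (j : Fin s), jacH N μ W piv c κ x (piv k) j = W k j := by
    intro k j
    have hfe : (fun y : Fin s → ℝ => hFun N μ W piv c κ y (piv k))
        = fun y : Fin s → ℝ => (∑ i, W k i * y i) - c k := by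
      funext y
      have hex : ∃ k', piv k' = piv k := ⟨k, rfl⟩
      simp only [hFun, dif_pos hex]
      have hch : Classical.choose hex = k := hpivinj (Classical.choose_spec hex)
      rw [hch]
      simp [Matrix.mulVec, dotProduct]
    have h2 : HasFDerivAt (fun y : Fin s → ℝ => (∑ i, W k i * y i) - c k)
        (∑ i, W k i • ContinuousLinearMap.proj (R := ℝ) (φ := fun _ : Fin s => ℝ) i) x := by
      apply HasFDerivAt.sub_const
      apply HasFDerivAt.fun_sum
      intro i _
      exact (hasFDerivAt_apply i x).const_mul (W k i)
    simp only [jacH, Matrix.of_apply]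
    rw [hfe, h2.fderiv]
    simp only [ContinuousLinearMap.coe_sum', Finset.sum_apply, ContinuousLinearMap.coe_smul',
      Pi.smul_apply, ContinuousLinearMap.proj_apply, Pi.single_apply, smul_eq_mul, mul_ite,
      mul_one, mul_zero]
    rw [Finset.sum_ite_eq' Finset.univ j (fun i => W k i)]
    simp
  have hHnon : ∀ i : Fin s, (¬ ∃ k, piv k = i) →
      ∀ j, jacH N μ W piv c κ x i j = jacF N μ κ x i j := by
    intro i hi j
    have hfe : (fun y : Fin s → ℝ => hFun N μ W piv c κ y i)
        = fun y : Fin s → ℝ => fRate N μ κ y i := by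
      funext y; simp only [hFun, dif_neg hi]
    simp only [jacH, jacF, Matrix.of_apply, hfe]
  -- dimension bookkeeping
  have hrs : r ≤ s := by
    have h1 := Submodule.finrank_le S
    rwa [hr, Module.finrank_fin_fun] at h1
  have hds : d + r = s := by omega
  let e0 : Fin d ⊕ Fin r ≃ Fin s := finSumFinEquiv.trans (finCongr hds)
  -- A with the pivot rows zeroed out
  set A' : Matrix (Fin s) (Fin r) ℝ :=
    Matrix.of (fun i k => if ∃ l, piv l = i then 0 else A i k) with hA'def
  set G : Matrix (Fin s) (Fin d ⊕ Fin r) ℝ := Matrix.fromCols E A' with hGdef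
  set V : Matrix (Fin d ⊕ Fin r) (Fin s) ℝ := Matrix.fromRows W B with hVdef
  have hGV : jacH N μ W piv c κ x = G * V := by
    ext i j
    rw [Matrix.mul_apply, Fintype.sum_sum_type]
    simp only [hGdef, hVdef, Matrix.fromCols_apply_inl, Matrix.fromCols_apply_inr,
      Matrix.fromRows_apply_inl, Matrix.fromRows_apply_inr, Matrix.of_apply, Sum.elim_inl,
      Sum.elim_inr, hA'def, hEdef]
    by_cases hex : ∃ k, piv k = i
    · obtain ⟨k0, rfl⟩ := hex
      rw [hHpiv k0 j]
      simp only [hpivinj.eq_iff, ite_mul, one_mul, zero_mul]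
      rw [Finset.sum_ite_eq' Finset.univ k0 (fun k => W k j)]
      simp
    · rw [hHnon i hex j]
      have h1 : ∀ k : Fin d, (if piv k = i then (1:ℝ) else 0) * W k j = 0 := by
        intro k
        rw [if_neg (fun h => hex ⟨k, h⟩), zero_mul]
      have h2 : ∀ k : Fin r, (if ∃ l, piv l = i then (0:ℝ) else A i k) * B k j = A i k * B k j := by
        intro k; rw [if_neg hex]
      simp only [h1, h2, Finset.sum_const_zero, zero_add]
      rw [hAB, Matrix.mul_apply]
  -- the pivot rows of A
  set Mp : Matrix (Fin d) (Fin r) ℝ := Matrix.of (fun k k' => A (piv k) k') with hMpdef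
  have hEMA : E * Mp + A' = A := by
    ext i k
    simp only [Matrix.add_apply, Matrix.mul_apply, hEdef, hA'def, hMpdef, Matrix.of_apply,
      ite_mul, one_mul, zero_mul]
    by_cases hex : ∃ l, piv l = i
    · obtain ⟨l0, rfl⟩ := hex
      simp only [hpivinj.eq_iff]
      rw [Finset.sum_ite_eq' Finset.univ l0 (fun l => A (piv l) k)]
      simp
    · push_neg at hex
      have : ∀ l : Fin d, (if piv l = i then A (piv l) k else 0) = 0 := by
        intro l; rw [if_neg (hex l)]
      simp only [this, Finset.sum_const_zero, zero_add]
      rw [if_neg (by push_neg; exact hex)]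
  have hGA : G * (Matrix.fromBlocks 1 Mp 0 1 : Matrix (Fin d ⊕ Fin r) (Fin d ⊕ Fin r) ℝ) =
      Matrix.fromCols E A := by
    rw [hGdef, Matrix.fromCols_mul_fromBlocks]
    rw [Matrix.mul_one, Matrix.mul_one, Matrix.mul_zero, add_zero, hEMA]
  -- determinant computation
  set G1 : Matrix (Fin s) (Fin s) ℝ := G.submatrix id e0.symm with hG1def
  set G2 : Matrix (Fin s) (Fin s) ℝ := (Matrix.fromCols E A).submatrix id e0.symm with hG2def
  set V1 : Matrix (Fin s) (Fin s) ℝ := V.submatrix e0.symm id with hV1def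
  have hdet1 : (jacH N μ W piv c κ x).det = G1.det * V1.det := by
    rw [hGV]
    have hmul : G1 * V1 = G * V := by
      rw [hG1def, hV1def, Matrix.submatrix_mul_equiv G V id e0.symm id, Matrix.submatrix_id_id]
    rw [← hmul, Matrix.det_mul]
  have hdetG : G1.det = G2.det := by
    have h1 : G1 * ((Matrix.fromBlocks 1 Mp 0 1).submatrix e0.symm e0.symm) = G2 := by
      rw [hG1def, hG2def, ← hGA]
      exact Matrix.submatrix_mul_equiv G (Matrix.fromBlocks 1 Mp 0 1) id e0.symm e0.symm
    have h2 : ((Matrix.fromBlocks 1 Mp 0 1).submatrix e0.symm e0.symm).det = 1 := by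
      rw [Matrix.det_submatrix_equiv_self, Matrix.det_fromBlocks_zero₂₁]
      simp
    calc G1.det = G1.det * ((Matrix.fromBlocks 1 Mp 0 1).submatrix e0.symm e0.symm).det := by
          rw [h2, mul_one]
      _ = G2.det := by rw [← Matrix.det_mul, h1]
  have hdet2 : G2.det * V1.det = (B * A).det := by
    rw [mul_comm, ← Matrix.det_mul]
    have h3 : V1 * G2 = (V * Matrix.fromCols E A).submatrix e0.symm e0.symm := by
      rw [hV1def, hG2def]
      exact Matrix.submatrix_mul_equiv V (Matrix.fromCols E A)
        e0.symm (Equiv.refl (Fin s)) e0.symm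
    rw [h3, Matrix.det_submatrix_equiv_self, hVdef, Matrix.fromRows_mul_fromCols, hWE, hWA,
      Matrix.det_fromBlocks_zero₁₂, Matrix.det_one, one_mul]
  rw [hdet1, hdetG, hdet2, pminorSum, hAB]
  exact cauchy_binet A B
end

section
/- Suppose l^{(1)},…,l^{(t)} ∈ ℱ(𝒩) generate the flux cone ℱ(𝒩), and let r = dim S. If B(p,λ) := Σ_{I ⊆ {1,…,s}, |I| = r} det(J(p,λ)[I,I]) vanishes for every p ∈ ℝ_{>0}^s and every λ ∈ ℝ_{≥0}^t, then for every κ ∈ ℝ_{>0}^m, every positive steady state x ∈ ℝ_{>0}^s for κ is degenerate; that is, the network admits only degenerate positive steady states. -/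
open Matrix BigOperators

section AuxiliaryLemmas
open Finset

lemma det_eq_sum_col {r : ℕ} (A : Matrix (Fin r) (Fin r) ℝ) :
    A.det = ∑ σ : Equiv.Perm (Fin r), ((Equiv.Perm.sign σ : ℤ) : ℝ) * ∏ i, A i (σ i) := by
  rw [← Matrix.det_transpose, Matrix.det_apply']
  simp [Matrix.transpose_apply]

lemma det_mul_expand_s6 {r s : ℕ} (B : Matrix (Fin r) (Fin s) ℝ) (C : Matrix (Fin s) (Fin r) ℝ) :
    Matrix.det (B * C) =
      ∑ p : Fin r → Fin s, (∏ i, B i (p i)) * Matrix.det (C.submatrix p id) := by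
  have h1 : B * C = Matrix.of (fun i => ∑ j, B i j • C j) := by
    ext i k
    simp [Matrix.mul_apply]
  rw [h1]
  have h2 : ∀ p : Fin r → Fin s,
      Matrix.detRowAlternating (fun i => C (p i)) = Matrix.det (C.submatrix p id) := by
    intro p; rfl
  calc Matrix.det (Matrix.of fun i => ∑ j, B i j • C j)
      = Matrix.detRowAlternating (fun i => ∑ j, B i j • C j) := rfl
    _ = ∑ p : Fin r → Fin s, Matrix.detRowAlternating (fun i => B i (p i) • C (p i)) := by
        rw [← Fintype.piFinset_univ]
        have := (Matrix.detRowAlternating (R := ℝ) (n := Fin r)).toMultilinearMap.map_sum_finset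
          (fun i j => B i j • C j) (fun _ => Finset.univ)
        rw [AlternatingMap.coe_multilinearMap] at this
        exact this
    _ = ∑ p : Fin r → Fin s, (∏ i, B i (p i)) * Matrix.det (C.submatrix p id) := by
        refine Finset.sum_congr rfl fun p _ => ?_
        have := (Matrix.detRowAlternating (R := ℝ) (n := Fin r)).toMultilinearMap.map_smul_univ
          (fun i => B i (p i)) (fun i => C (p i))
        rw [AlternatingMap.coe_multilinearMap] at this
        rw [this, h2 p]
        simp [smul_eq_mul]

lemma pminorSum_eq_det {r s : ℕ} (B : Matrix (Fin r) (Fin s) ℝ) (C : Matrix (Fin s) (Fin r) ℝ) :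
    pminorSum r (C * B) = Matrix.det (B * C) := by
  classical
  rw [det_mul_expand_s6]
  -- kill non-injective terms
  rw [← Finset.sum_filter_add_sum_filter_not Finset.univ (fun p => Function.Injective p)
    (fun p => (∏ i, B i (p i)) * Matrix.det (C.submatrix p id))]
  have hzero : ∑ p ∈ Finset.univ.filter (fun p : Fin r → Fin s => ¬ Function.Injective p),
      (∏ i, B i (p i)) * Matrix.det (C.submatrix p id) = 0 := by
    refine Finset.sum_eq_zero fun p hp => ?_
    have hp2 : ¬ Function.Injective p := (Finset.mem_filter.mp hp).2
    simp only [Function.Injective] at hp2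
    push_neg at hp2
    obtain ⟨i, j, hij, hne⟩ := hp2
    have : Matrix.det (C.submatrix p id) = 0 := by
      refine Matrix.det_zero_of_row_eq hne ?_
      funext k
      simp [Matrix.submatrix_apply, hij]
    rw [this, mul_zero]
  rw [hzero, add_zero]
  -- fiber over images
  have hmaps : ∀ p ∈ Finset.univ.filter (fun p : Fin r → Fin s => Function.Injective p),
      Finset.image p Finset.univ ∈ Finset.powersetCard r (Finset.univ : Finset (Fin s)) := by
    intro p hp
    simp only [Finset.mem_filter] at hp
    rw [Finset.mem_powersetCard_univ, Finset.card_image_of_injective _ hp.2, Finset.card_univ,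
      Fintype.card_fin]
  rw [← Finset.sum_fiberwise_of_maps_to hmaps
    (fun p => (∏ i, B i (p i)) * Matrix.det (C.submatrix p id))]
  unfold pminorSum
  refine Finset.sum_congr rfl fun I hI => ?_
  have hIcard : I.card = r := Finset.mem_powersetCard_univ.mp hI
  set g : Fin r → Fin s := fun i => I.orderEmbOfFin hIcard i with hg
  have hginj : Function.Injective g := (I.orderEmbOfFin hIcard).injective
  have hgmem : ∀ i, g i ∈ I := fun i => Finset.orderEmbOfFin_mem I hIcard i
  have hgimage : Finset.image g Finset.univ = I := by
    apply Finset.eq_of_subset_of_card_le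
    · intro a ha
      obtain ⟨i, _, rfl⟩ := Finset.mem_image.mp ha
      exact hgmem i
    · rw [hIcard, Finset.card_image_of_injective _ hginj, Finset.card_univ, Fintype.card_fin]
  -- inner sum = sum over permutations
  have hbij : ∑ σ : Equiv.Perm (Fin r),
      (∏ i, B i (g (σ i))) * Matrix.det (C.submatrix (g ∘ σ) id)
      = ∑ p ∈ (Finset.univ.filter (fun p : Fin r → Fin s => Function.Injective p)).filter
          (fun p => Finset.image p Finset.univ = I),
        (∏ i, B i (p i)) * Matrix.det (C.submatrix p id) := by
    refine Finset.sum_bij (fun σ _ => g ∘ σ) ?_ ?_ ?_ ?_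
    · intro σ _
      simp only [Finset.mem_filter, Finset.mem_univ, true_and]
      constructor
      · exact hginj.comp σ.injective
      · rw [show Finset.image (g ∘ σ) Finset.univ = Finset.image g (Finset.image σ Finset.univ)
          from (Finset.image_image).symm, Finset.image_univ_equiv, hgimage]
    · intro σ _ σ' _ h
      exact Equiv.ext fun i => hginj (congrFun h i)
    · intro p hp
      simp only [Finset.mem_filter, Finset.mem_univ, true_and] at hp
      obtain ⟨hpinj, hpimg⟩ := hp
      have hpi : ∀ i, p i ∈ I := by
        intro i
        rw [← hpimg]
        exact Finset.mem_image_of_mem p (Finset.mem_univ i)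
      set q : Fin r → Fin r := fun i => (I.orderIsoOfFin hIcard).symm ⟨p i, hpi i⟩ with hq
      have hqinj : Function.Injective q := by
        intro i j h
        apply hpinj
        have h2 : ((I.orderIsoOfFin hIcard) (q i) : Fin s)
            = ((I.orderIsoOfFin hIcard) (q j) : Fin s) := by rw [h]
        simpa [hq, OrderIso.apply_symm_apply] using h2
      refine ⟨Equiv.ofBijective q ((Finite.injective_iff_bijective).mp hqinj), Finset.mem_univ _, ?_⟩
      funext i
      show g (q i) = p i
      rw [hg]
      simp only [hq]
      rw [← Finset.coe_orderIsoOfFin_apply]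
      simp [OrderIso.apply_symm_apply]
    · intro σ _
      rfl
  rw [← hbij]
  -- compute the permutation sum
  have hperm : ∀ σ : Equiv.Perm (Fin r),
      Matrix.det (C.submatrix (g ∘ σ) id)
        = ((Equiv.Perm.sign σ : ℤ) : ℝ) * Matrix.det (C.submatrix g id) := by
    intro σ
    have : C.submatrix (g ∘ σ) id = (C.submatrix g id).submatrix σ id := rfl
    rw [this, Matrix.det_permute]
  calc Matrix.det ((C * B).submatrix (Subtype.val : {a // a ∈ I} → Fin s) Subtype.val)
      = Matrix.det ((C * B).submatrix g g) := by
        have hge : ∀ y : {a // a ∈ I},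
            g (((I.orderIsoOfFin hIcard).toEquiv.symm : {a // a ∈ I} → Fin r) y) = (y : Fin s) := by
          intro y
          rw [hg]
          simp only
          rw [← Finset.coe_orderIsoOfFin_apply]
          congr 1
          exact (I.orderIsoOfFin hIcard).apply_symm_apply y
        have heq : (C * B).submatrix (Subtype.val : {a // a ∈ I} → Fin s) Subtype.val
            = ((C * B).submatrix g g).submatrix
                (I.orderIsoOfFin hIcard).toEquiv.symm (I.orderIsoOfFin hIcard).toEquiv.symm := by
          ext a b
          simp only [Matrix.submatrix_apply]
          rw [hge a, hge b]
        rw [heq, Matrix.det_submatrix_equiv_self]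
    _ = Matrix.det (C.submatrix g id * B.submatrix id g) := by
        rw [Matrix.submatrix_mul C B g (id : Fin r → Fin r) g Function.bijective_id]
    _ = Matrix.det (C.submatrix g id) * Matrix.det (B.submatrix id g) := Matrix.det_mul _ _
    _ = ∑ σ : Equiv.Perm (Fin r),
          (∏ i, B i (g (σ i))) * Matrix.det (C.submatrix (g ∘ σ) id) := by
        rw [det_eq_sum_col (B.submatrix id g), Finset.mul_sum]
        refine Finset.sum_congr rfl fun σ _ => ?_
        rw [hperm σ]
        simp only [Matrix.submatrix_apply, id_eq]
        ring

lemma not_surjective_restrict {s r : ℕ} (M : Matrix (Fin s) (Fin s) ℝ)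
    (S : Submodule ℝ (Fin s → ℝ))
    (hcol : ∀ j, (fun i => M i j) ∈ S)
    (hr : Module.finrank ℝ S = r)
    (h0 : pminorSum r M = 0)
    (hmap : ∀ u ∈ S, M.mulVecLin u ∈ S) :
    ¬ Function.Surjective (M.mulVecLin.restrict hmap) := by
  classical
  intro hsurj
  have : FiniteDimensional ℝ S := inferInstance
  let b : Module.Basis (Fin r) ℝ S := Module.finBasisOfFinrankEq ℝ S hr
  let C : Matrix (Fin s) (Fin r) ℝ := fun i k => (b k : Fin s → ℝ) i
  let B : Matrix (Fin r) (Fin s) ℝ := fun k j => b.repr ⟨fun i => M i j, hcol j⟩ k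
  have hM : M = C * B := by
    ext i j
    have h1 := b.sum_repr ⟨fun i => M i j, hcol j⟩
    have h2 := congrArg (fun v : S => (v : Fin s → ℝ) i) h1
    simp only [Submodule.coe_sum, Finset.sum_apply, SetLike.val_smul, Pi.smul_apply,
      smul_eq_mul] at h2
    rw [Matrix.mul_apply]
    rw [← h2]
    refine Finset.sum_congr rfl fun k _ => mul_comm _ _
  set φ := M.mulVecLin.restrict hmap with hφ
  have hφmat : LinearMap.toMatrix b b φ = B * C := by
    ext k k'
    rw [LinearMap.toMatrix_apply]
    have hval : ((φ (b k') : S) : Fin s → ℝ) = fun i => ∑ k'' , (B * C) k'' k' * C i k'' := by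
      funext i
      show M.mulVec ((b k' : S) : Fin s → ℝ) i = _
      rw [Matrix.mulVec, dotProduct]
      have hstep : ∀ j, M i j * (b k' : Fin s → ℝ) j
          = ∑ k'', C i k'' * B k'' j * (b k' : Fin s → ℝ) j := by
        intro j
        rw [hM, Matrix.mul_apply, Finset.sum_mul]
      rw [Finset.sum_congr rfl fun j _ => hstep j]
      rw [Finset.sum_comm]
      refine Finset.sum_congr rfl fun k'' _ => ?_
      rw [Matrix.mul_apply, Finset.sum_mul]
      refine Finset.sum_congr rfl fun j _ => ?_
      show C i k'' * B k'' j * (b k' : Fin s → ℝ) j = B k'' j * C j k' * C i k''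
      show C i k'' * B k'' j * C j k' = B k'' j * C j k' * C i k''
      ring
    have : φ (b k') = ∑ k'', (B * C) k'' k' • b k'' := by
      apply Subtype.ext
      rw [hval]
      simp only [Submodule.coe_sum, SetLike.val_smul]
      funext i
      simp [smul_eq_mul, Finset.sum_apply, mul_comm]
      rfl
    rw [this, Module.Basis.repr_sum_self]
  have hdet : LinearMap.det φ = 0 := by
    rw [← LinearMap.det_toMatrix b φ, hφmat,
      show Matrix.det (B * C) = pminorSum r (C * B) from (pminorSum_eq_det B C).symm, ← hM, h0]
  have hinj : Function.Injective φ := LinearMap.injective_iff_surjective.mpr hsurj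
  have : IsUnit (LinearMap.det φ) := by
    have := (LinearEquiv.ofBijective φ ⟨hinj, hsurj⟩).isUnit_det'
    convert this using 2 <;> rfl
  rw [hdet] at this
  exact this.ne_zero rfl

lemma jacF_eq {s m : ℕ} (N : Matrix (Fin s) (Fin m) ℝ) (μ : Fin s → Fin m → ℕ)
    (𝒳 : Matrix (Fin s) (Fin m) ℝ) (h𝒳 : ∀ i j, 𝒳 i j = (μ i j : ℝ))
    (κ : Fin m → ℝ) (x : Fin s → ℝ) (hx : ∀ i, 0 < x i) :
    jacF N μ κ x = N * Matrix.diagonal (vRate μ κ x) * 𝒳ᵀ *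
      Matrix.diagonal (fun i => (x i)⁻¹) := by
  classical
  -- derivative of each product
  have hprod : ∀ j : Fin m, HasFDerivAt (fun y : Fin s → ℝ => ∏ k, y k ^ μ k j)
      (∑ k, (∏ k' ∈ Finset.univ.erase k, x k' ^ μ k' j) •
        (((μ k j : ℝ) * x k ^ (μ k j - 1)) • (ContinuousLinearMap.proj k : (Fin s → ℝ) →L[ℝ] ℝ))) x := by
    intro j
    have h1 : ∀ k : Fin s, HasFDerivAt (fun y : Fin s → ℝ => y k ^ μ k j)
        (((μ k j : ℝ) * x k ^ (μ k j - 1)) •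
          (ContinuousLinearMap.proj k : (Fin s → ℝ) →L[ℝ] ℝ)) x := by
      intro k
      exact (hasDerivAt_pow (μ k j) (x k)).comp_hasFDerivAt x
        ((ContinuousLinearMap.proj k : (Fin s → ℝ) →L[ℝ] ℝ).hasFDerivAt)
    exact HasFDerivAt.finset_prod (fun k _ => h1 k)
  have hF : ∀ i : Fin s, HasFDerivAt (fun y : Fin s → ℝ => fRate N μ κ y i)
      (∑ j, (N i j * κ j) • (∑ k, (∏ k' ∈ Finset.univ.erase k, x k' ^ μ k' j) •
        (((μ k j : ℝ) * x k ^ (μ k j - 1)) • (ContinuousLinearMap.proj k : (Fin s → ℝ) →L[ℝ] ℝ)))) x := by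
    intro i
    have heq : (fun y : Fin s → ℝ => fRate N μ κ y i)
        = fun y => ∑ j, N i j * κ j * ∏ k, y k ^ μ k j := by
      funext y
      simp [fRate, vRate, Matrix.mulVec, dotProduct, mul_assoc]
    rw [heq]
    exact HasFDerivAt.fun_sum fun j _ => ((hprod j).const_mul (N i j * κ j))
  ext i c
  rw [jacF, Matrix.of_apply, (hF i).fderiv]
  -- evaluate the derivative at Pi.single c 1
  have heval : (∑ j, (N i j * κ j) • (∑ k, (∏ k' ∈ Finset.univ.erase k, x k' ^ μ k' j) •
        (((μ k j : ℝ) * x k ^ (μ k j - 1)) • (ContinuousLinearMap.proj k : (Fin s → ℝ) →L[ℝ] ℝ))))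
        (Pi.single c (1:ℝ))
      = ∑ j, N i j * κ j * ((∏ k' ∈ Finset.univ.erase c, x k' ^ μ k' j) *
          ((μ c j : ℝ) * x c ^ (μ c j - 1))) := by
    rw [ContinuousLinearMap.sum_apply]
    refine Finset.sum_congr rfl fun j _ => ?_
    rw [ContinuousLinearMap.smul_apply, ContinuousLinearMap.sum_apply]
    rw [Finset.sum_eq_single c]
    · simp only [ContinuousLinearMap.smul_apply, ContinuousLinearMap.proj_apply,
        Pi.single_eq_same, smul_eq_mul, mul_one]
      try ring
    · intro k _ hk
      simp [ContinuousLinearMap.proj_apply, Pi.single_apply, hk]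
    · intro h
      exact absurd (Finset.mem_univ c) h
  rw [heval]
  -- compute the matrix product entry
  have hentry : (N * Matrix.diagonal (vRate μ κ x) * 𝒳ᵀ *
      Matrix.diagonal (fun i => (x i)⁻¹)) i c
      = ∑ j, N i j * vRate μ κ x j * (μ c j : ℝ) * (x c)⁻¹ := by
    rw [Matrix.mul_diagonal, Matrix.mul_apply, Finset.sum_mul]
    refine Finset.sum_congr rfl fun j _ => ?_
    rw [Matrix.mul_diagonal, Matrix.transpose_apply, h𝒳]
  rw [hentry]
  refine Finset.sum_congr rfl fun j _ => ?_
  -- per-term identity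
  have hprodfull : ∏ k, x k ^ μ k j = x c ^ μ c j * ∏ k' ∈ Finset.univ.erase c, x k' ^ μ k' j :=
    (Finset.mul_prod_erase Finset.univ _ (Finset.mem_univ c)).symm
  rw [vRate, hprodfull]
  rcases Nat.eq_zero_or_pos (μ c j) with h0 | hpos
  · simp [h0]
  · have hxc : x c ≠ 0 := ne_of_gt (hx c)
    have hpow : x c ^ (μ c j - 1) = x c ^ μ c j * (x c)⁻¹ := by
      obtain ⟨n, hn⟩ := Nat.exists_eq_succ_of_ne_zero (Nat.pos_iff_ne_zero.mp hpos)
      rw [hn, Nat.succ_sub_one, pow_succ, mul_assoc, mul_inv_cancel₀ hxc, mul_one]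
    rw [hpow]
    ring

end AuxiliaryLemmas

/-- if `B(p,λ) = Σ_{|I|=r} det J(p,λ)[I,I]` vanishes for all `p ∈ ℝ_{>0}^s`
and `λ ∈ ℝ_{≥0}^t`, then every positive steady state (for every positive `κ`) is
degenerate: the endomorphism of the stoichiometric subspace `S` induced by `Jac_f(κ,x)`
is not surjective. -/
theorem network_degenerate_of_B_vanishes {s m t r : ℕ} (μ ν : Fin s → Fin m → ℕ)
    (hdiff : ∀ j, ∃ i, μ i j ≠ ν i j)
    (N : Matrix (Fin s) (Fin m) ℝ)
    (hN : ∀ i j, N i j = (ν i j : ℝ) - (μ i j : ℝ))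
    (𝒳 : Matrix (Fin s) (Fin m) ℝ)
    (h𝒳 : ∀ i j, 𝒳 i j = (μ i j : ℝ))
    -- S is the stoichiometric subspace, of dimension r
    (S : Submodule ℝ (Fin s → ℝ))
    (hS : S = Submodule.span ℝ (Set.range Nᵀ))
    (hr : Module.finrank ℝ S = r)
    -- the l⁽ⁱ⁾ generate the flux cone
    (l : Fin t → Fin m → ℝ)
    (hl : ∀ i, l i ∈ fluxCone N)
    (hgen : ∀ α ∈ fluxCone N, ∃ lam : Fin t → ℝ,
      (∀ i, 0 ≤ lam i) ∧ α = ∑ i, lam i • l i)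
    -- B(p, λ) vanishes for all positive p and nonnegative λ
    (hB : ∀ (p : Fin s → ℝ) (lam : Fin t → ℝ), (∀ i, 0 < p i) → (∀ i, 0 ≤ lam i) →
      pminorSum r
        (N * Matrix.diagonal (fun j => ∑ i, lam i * l i j) * 𝒳ᵀ *
          Matrix.diagonal p) = 0) :
    ∀ (κ : Fin m → ℝ), (∀ j, 0 < κ j) →
      ∀ (x : Fin s → ℝ), (∀ i, 0 < x i) → fRate N μ κ x = 0 →
        ∀ hmap : ∀ u ∈ S, (jacF N μ κ x).mulVecLin u ∈ S,
          ¬ Function.Surjective ((jacF N μ κ x).mulVecLin.restrict hmap) := by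
  classical
  intro κ hκ x hx hss hmap
  set α : Fin m → ℝ := vRate μ κ x with hα
  have hαflux : α ∈ fluxCone N := by
    constructor
    · intro j
      exact le_of_lt (mul_pos (hκ j) (Finset.prod_pos fun i _ => pow_pos (hx i) _))
    · exact hss
  obtain ⟨lam, hlam0, hlameq⟩ := hgen α hαflux
  have hαj : (fun j => ∑ i, lam i * l i j) = α := by
    funext j
    rw [hlameq]
    simp [Finset.sum_apply]
  have hJac := jacF_eq N μ 𝒳 h𝒳 κ x hx
  have h0 : pminorSum r (jacF N μ κ x) = 0 := by
    rw [hJac]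
    have := hB (fun i => (x i)⁻¹) lam (fun i => inv_pos.2 (hx i)) hlam0
    rwa [hαj] at this
  have hJac2 : jacF N μ κ x
      = N * (Matrix.diagonal α * 𝒳ᵀ * Matrix.diagonal (fun i => (x i)⁻¹)) := by
    rw [hJac]
    simp only [Matrix.mul_assoc]
    rfl
  have hcol : ∀ c, (fun i => jacF N μ κ x i c) ∈ S := by
    intro c
    rw [hS]
    have hrep : (fun i => jacF N μ κ x i c)
        = ∑ k, ((Matrix.diagonal α * 𝒳ᵀ * Matrix.diagonal (fun i => (x i)⁻¹)) k c) • Nᵀ k := by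
      funext i
      rw [hJac2]
      simp [Matrix.mul_apply, Finset.sum_apply, Matrix.transpose_apply, mul_comm]
    rw [hrep]
    exact Submodule.sum_mem _ fun k _ =>
      Submodule.smul_mem _ _ (Submodule.subset_span ⟨k, rfl⟩)
  exact not_surjective_restrict (jacF N μ κ x) S hcol hr h0 hmap
end

section
/- A reaction network admits a positive steady state for some κ ∈ ℝ_{>0}^m if and only if the flux cone ℱ(𝒩) contains a strictly positive vector, i.e., ℱ(𝒩) ∩ ℝ_{>0}^m ≠ ∅. -/
open Matrix BigOperators

/-!
The rate vector `v(κ, x)` at a positive steady state is a strictly positive element of the flux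
cone. Conversely, at `x = 1` every monomial equals `1`, so `v(α, 1) = α`; a strictly positive
flux `α` is therefore realised by the rate constants `κ = α` with steady state `x = 1`.
-/

section MassAction

variable {s m : ℕ} (μ : Fin s → Fin m → ℕ)

theorem vRate_pos {κ : Fin m → ℝ} {x : Fin s → ℝ} (hκ : ∀ j, 0 < κ j) (hx : ∀ i, 0 < x i)
    (j : Fin m) : 0 < vRate μ κ x j :=
  mul_pos (hκ j) (Finset.prod_pos fun i _ => pow_pos (hx i) _)

@[simp]
theorem vRate_one (κ : Fin m → ℝ) : vRate μ κ 1 = κ := by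
  funext j
  simp [vRate]

theorem fRate_one (N : Matrix (Fin s) (Fin m) ℝ) (κ : Fin m → ℝ) : fRate N μ κ 1 = N *ᵥ κ := by
  rw [fRate, vRate_one]

end MassAction

theorem exists_positive_steady_state_iff_fluxCone_pos_general
    {s m : ℕ} (μ : Fin s → Fin m → ℕ)
    (N : Matrix (Fin s) (Fin m) ℝ) :
    (∃ (κ : Fin m → ℝ) (x : Fin s → ℝ),
        (∀ j, 0 < κ j) ∧ (∀ i, 0 < x i) ∧ fRate N μ κ x = 0) ↔
      ∃ α ∈ fluxCone N, ∀ j, 0 < α j := by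
  constructor
  · rintro ⟨κ, x, hκ, hx, hsteady⟩
    have hv := vRate_pos μ hκ hx
    exact ⟨vRate μ κ x, ⟨fun j => (hv j).le, hsteady⟩, hv⟩
  · rintro ⟨α, ⟨-, hαN⟩, hα⟩
    exact ⟨α, 1, hα, fun _ => one_pos, by rw [fRate_one, hαN]⟩

/-- a reaction network admits a positive steady state for some positive
rate constants `κ` if and only if the flux cone `ℱ(𝒩)` contains a strictly positive
vector. -/
theorem exists_positive_steady_state_iff_fluxCone_pos
    {s m : ℕ} (μ ν : Fin s → Fin m → ℕ)
    (hdiff : ∀ j, ∃ i, μ i j ≠ ν i j)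
    (N : Matrix (Fin s) (Fin m) ℝ)
    (hN : ∀ i j, N i j = (ν i j : ℝ) - (μ i j : ℝ)) :
    (∃ (κ : Fin m → ℝ) (x : Fin s → ℝ),
        (∀ j, 0 < κ j) ∧ (∀ i, 0 < x i) ∧ fRate N μ κ x = 0) ↔
      ∃ α ∈ fluxCone N, ∀ j, 0 < α j :=
  exists_positive_steady_state_iff_fluxCone_pos_general μ N
end

section
/- Fix κ_1, κ_2, κ_3, κ_4 ∈ ℝ_{>0} and define f_1(x) = f_2(x) = κ_1 + κ_2 − κ_4 x_1 x_2 x_3 and f_3(x) = κ_1 + κ_3 − κ_4 x_1 x_2 x_3 for x ∈ ℝ^3. Then: (a) there exists x ∈ ℝ_{>0}^3 with f_1(x) = f_2(x) = f_3(x) = 0 if and only if κ_2 = κ_3; and (b) for every x ∈ ℝ_{>0}^3, the determinant of the 3×3 matrix whose rows are (1,−1,0), ∇f_2(x), and ∇f_3(x) is zero, so every positive steady state of this network is degenerate. -/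
/-- for the two-dimensional network `0 → X₁+X₂+X₃`, `0 → X₁+X₂`, `0 → X₃`,
`X₁+X₂+X₃ → 0` with positive rate constants: (a) a positive steady state exists iff
`κ₂ = κ₃`; and (b) at every positive point the determinant of the matrix whose rows are
the conservation law `(1, -1, 0)` and the gradients `∇f₂`, `∇f₃` is zero, so every
positive steady state is degenerate. -/
theorem degenerate_network_three_species
    (κ₁ κ₂ κ₃ κ₄ : ℝ) (hκ₁ : 0 < κ₁) (hκ₂ : 0 < κ₂) (hκ₃ : 0 < κ₃) (hκ₄ : 0 < κ₄)
    (f₁ f₂ f₃ : (Fin 3 → ℝ) → ℝ)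
    (hf₁ : ∀ x, f₁ x = κ₁ + κ₂ - κ₄ * x 0 * x 1 * x 2)
    (hf₂ : ∀ x, f₂ x = κ₁ + κ₂ - κ₄ * x 0 * x 1 * x 2)
    (hf₃ : ∀ x, f₃ x = κ₁ + κ₃ - κ₄ * x 0 * x 1 * x 2) :
    ((∃ x : Fin 3 → ℝ, (∀ i, 0 < x i) ∧ f₁ x = 0 ∧ f₂ x = 0 ∧ f₃ x = 0) ↔ κ₂ = κ₃) ∧
    (∀ x : Fin 3 → ℝ, (∀ i, 0 < x i) →
      Matrix.det !![(1 : ℝ), -1, 0;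
        fderiv ℝ f₂ x (Pi.single 0 1), fderiv ℝ f₂ x (Pi.single 1 1),
          fderiv ℝ f₂ x (Pi.single 2 1);
        fderiv ℝ f₃ x (Pi.single 0 1), fderiv ℝ f₃ x (Pi.single 1 1),
          fderiv ℝ f₃ x (Pi.single 2 1)] = 0) := by
  constructor
  · constructor
    · rintro ⟨x, hx, h1, h2, h3⟩
      rw [hf₂ x] at h2
      rw [hf₃ x] at h3
      linarith
    · intro h23
      refine ⟨![1, 1, (κ₁ + κ₂) / κ₄], ?_, ?_, ?_, ?_⟩
      · intro i
        fin_cases i <;> simp <;> positivity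
      · rw [hf₁]; simp; field_simp; ring
      · rw [hf₂]; simp; field_simp; ring
      · rw [hf₃]; simp; subst h23; field_simp; ring
  · intro x hx
    have hfe : f₃ = fun y => f₂ y + (κ₃ - κ₂) := by
      funext y; rw [hf₂ y, hf₃ y]; ring
    have hder : fderiv ℝ f₃ x = fderiv ℝ f₂ x := by
      rw [hfe, fderiv_add_const]
    rw [hder]
    generalize fderiv ℝ f₂ x (Pi.single 0 1) = a
    generalize fderiv ℝ f₂ x (Pi.single 1 1) = b
    generalize fderiv ℝ f₂ x (Pi.single 2 1) = c
    rw [Matrix.det_fin_three]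
    simp [Matrix.vecHead, Matrix.vecTail]
    ring
end

section
/- Fix κ_1, κ_2, κ_3, κ_4, κ_5 ∈ ℝ_{>0} and define f_1(x_1,x_2) = κ_1 + κ_2 − κ_5 x_1 x_2 and f_2(x_1,x_2) = κ_1 + κ_3 − κ_4 x_1 x_2. Then: (a) the determinant of the Jacobian matrix of (f_1,f_2) with respect to (x_1,x_2) is identically zero on ℝ^2, so every positive steady state of this network is degenerate; and (b) there exists (x_1,x_2) ∈ ℝ_{>0}^2 with f_1 = f_2 = 0 if and only if κ_4(κ_1 + κ_2) = κ_5(κ_1 + κ_3). -/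
lemma deriv_const_sub_const_mul (a c x : ℝ) :
    deriv (fun t => a - c * t) x = -c := by
  have h : HasDerivAt (fun t : ℝ => a - c * t) (-c) x := by
    simpa using ((hasDerivAt_id x).const_mul c).const_sub a
  exact h.deriv

/-- for the network `0 → X₁+X₂`, `0 → X₁`, `0 → X₂`, `X₁+X₂ → X₁`,
`X₁+X₂ → X₂` with positive rate constants: (a) the determinant of the Jacobian matrix of
`(f₁, f₂)` is identically zero on `ℝ²`, so every positive steady state is degenerate; and
(b) a positive steady state exists iff `κ₄(κ₁+κ₂) = κ₅(κ₁+κ₃)`. -/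
theorem degenerate_network_two_species
    (κ₁ κ₂ κ₃ κ₄ κ₅ : ℝ)
    (hκ₁ : 0 < κ₁) (hκ₂ : 0 < κ₂) (hκ₃ : 0 < κ₃) (hκ₄ : 0 < κ₄) (hκ₅ : 0 < κ₅)
    (f₁ f₂ : ℝ → ℝ → ℝ)
    (hf₁ : ∀ x₁ x₂, f₁ x₁ x₂ = κ₁ + κ₂ - κ₅ * x₁ * x₂)
    (hf₂ : ∀ x₁ x₂, f₂ x₁ x₂ = κ₁ + κ₃ - κ₄ * x₁ * x₂) :
    (∀ x₁ x₂ : ℝ,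
      Matrix.det !![deriv (fun t => f₁ t x₂) x₁, deriv (fun t => f₁ x₁ t) x₂;
                    deriv (fun t => f₂ t x₂) x₁, deriv (fun t => f₂ x₁ t) x₂] = 0) ∧
    ((∃ x₁ x₂ : ℝ, 0 < x₁ ∧ 0 < x₂ ∧ f₁ x₁ x₂ = 0 ∧ f₂ x₁ x₂ = 0) ↔
      κ₄ * (κ₁ + κ₂) = κ₅ * (κ₁ + κ₃)) := by

  constructor
  · intro x₁ x₂
    have d1 : deriv (fun t => f₁ t x₂) x₁ = -(κ₅ * x₂) := by
      simp only [hf₁]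
      have : (fun t => κ₁ + κ₂ - κ₅ * t * x₂) = fun t => κ₁ + κ₂ - (κ₅ * x₂) * t := by
        funext t; ring
      rw [this, deriv_const_sub_const_mul]
    have d2 : deriv (fun t => f₁ x₁ t) x₂ = -(κ₅ * x₁) := by
      simp only [hf₁]
      have : (fun t => κ₁ + κ₂ - κ₅ * x₁ * t) = fun t => κ₁ + κ₂ - (κ₅ * x₁) * t := by
        funext t; ring
      rw [this, deriv_const_sub_const_mul]
    have d3 : deriv (fun t => f₂ t x₂) x₁ = -(κ₄ * x₂) := by
      simp only [hf₂]
      have : (fun t => κ₁ + κ₃ - κ₄ * t * x₂) = fun t => κ₁ + κ₃ - (κ₄ * x₂) * t := by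
        funext t; ring
      rw [this, deriv_const_sub_const_mul]
    have d4 : deriv (fun t => f₂ x₁ t) x₂ = -(κ₄ * x₁) := by
      simp only [hf₂]
      have : (fun t => κ₁ + κ₃ - κ₄ * x₁ * t) = fun t => κ₁ + κ₃ - (κ₄ * x₁) * t := by
        funext t; ring
      rw [this, deriv_const_sub_const_mul]
    rw [d1, d2, d3, d4, Matrix.det_fin_two_of]
    ring
  · constructor
    · rintro ⟨x₁, x₂, hx₁, hx₂, h1, h2⟩
      rw [hf₁] at h1; rw [hf₂] at h2
      have e1 : κ₅ * x₁ * x₂ = κ₁ + κ₂ := by linarith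
      have e2 : κ₄ * x₁ * x₂ = κ₁ + κ₃ := by linarith
      have : κ₄ * (κ₅ * x₁ * x₂) = κ₅ * (κ₄ * x₁ * x₂) := by ring
      rw [e1, e2] at this; exact this
    · intro h
      refine ⟨1, (κ₁ + κ₂) / κ₅, one_pos, by positivity, ?_, ?_⟩
      · rw [hf₁]; field_simp; ring
      · rw [hf₂]
        have : κ₄ * 1 * ((κ₁ + κ₂) / κ₅) = κ₁ + κ₃ := by
          field_simp; linarith
        linarith
end
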